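/- arXiv:2411.10792 — 7 statements merged into one kernel-verified Lean document; each statement's English description precedes it below -/
import Mathlib

section
/- Let n be a natural number. Let D be a graph whose vertex set is B ∪ C, where A = B ∩ C and no vertex of B ∖ A is adjacent in D to a vertex of C ∖ A (D is the free amalgam of B and C over A). If B, C are finite, the induced subgraphs of D on B and on C are n-open, A ≤ₙ B and A ≤ₙ C, then D is n-open, B ≤ₙ D and C ≤ₙ D. In particular, the class of finite n-open graphs with the relation ≤ₙ has the amalgamation and joint embedding properties. -/
/-- `v` has at most `n` neighbours (in the graph `G`) lying in the set `X`. -/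
def valencyLE {V : Type*} (G : SimpleGraph V) (v : V) (X : Set V) (n : ℕ) : Prop :=
  {x ∈ X | G.Adj v x}.encard ≤ n

/-- `B` is `n`-open over `A`: every nonempty finite subset `C` of `B \ A` contains a vertex
whose valency in `A ∪ C` is at most `n`. -/
def nOpenOver {V : Type*} (G : SimpleGraph V) (n : ℕ) (A B : Set V) : Prop :=
  ∀ C : Set V, C ⊆ B \ A → C.Finite → C.Nonempty →
    ∃ c ∈ C, valencyLE G c (A ∪ C) n

/-- `B` is `n`-open: every nonempty finite subset `C` of `B` contains a vertex whose valency
in `C` is at most `n`. -/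
def nOpen {V : Type*} (G : SimpleGraph V) (n : ℕ) (B : Set V) : Prop :=
  ∀ C : Set V, C ⊆ B → C.Finite → C.Nonempty →
    ∃ c ∈ C, valencyLE G c C n

lemma valencyLE_mono {V : Type*} (G : SimpleGraph V) (v : V) {X Y : Set V} (n : ℕ)
    (h : ∀ x ∈ X, G.Adj v x → x ∈ Y) (hY : valencyLE G v Y n) : valencyLE G v X n := by
  refine le_trans (Set.encard_mono ?_) hY
  rintro x ⟨hx, ha⟩
  exact ⟨h x hx ha, ha⟩

theorem stmt0 {V : Type*} (G : SimpleGraph V) (n : ℕ) (A B C : Set V)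
    (hA : A = B ∩ C)
    (hfree : ∀ b ∈ B \ A, ∀ c ∈ C \ A, ¬ G.Adj b c)
    (hBfin : B.Finite) (hCfin : C.Finite)
    (hBopen : nOpen G n B) (hCopen : nOpen G n C)
    (hAB : nOpenOver G n A B) (hAC : nOpenOver G n A C) :
    nOpen G n (B ∪ C) ∧ nOpenOver G n B (B ∪ C) ∧ nOpenOver G n C (B ∪ C) := by
  have hAsubB : A ⊆ B := hA ▸ Set.inter_subset_left
  refine ⟨?_, ?_, ?_⟩
  · intro X hX hXfin hXne
    by_cases hXB : X ⊆ B
    · exact hBopen X hXB hXfin hXne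
    · -- X has a point outside B, hence X ∩ (C \ A) is nonempty
      obtain ⟨y, hyX, hyB⟩ := Set.not_subset.1 hXB
      set Y := X ∩ (C \ A) with hY
      have hYsub : Y ⊆ C \ A := Set.inter_subset_right
      have hYne : Y.Nonempty := by
        refine ⟨y, hyX, ?_, fun hyA => hyB (hAsubB hyA)⟩
        rcases hX hyX with h | h
        · exact absurd h hyB
        · exact h
      obtain ⟨c, hcY, hc⟩ := hAC Y hYsub (hXfin.inter_of_left _) hYne
      refine ⟨c, hcY.1, valencyLE_mono G c n ?_ hc⟩
      intro x hxX hadj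
      rcases hX hxX with hxB | hxC
      · by_cases hxA : x ∈ A
        · exact Or.inl hxA
        · exact absurd hadj (fun h => hfree x ⟨hxB, hxA⟩ c (hYsub hcY) h.symm)
      · by_cases hxA : x ∈ A
        · exact Or.inl hxA
        · exact Or.inr ⟨hxX, hxC, hxA⟩
  · intro X hX hXfin hXne
    have hXsub : X ⊆ C \ A := fun x hx =>
      ⟨(hX hx).1.resolve_left (hX hx).2, fun hxA => (hX hx).2 (hAsubB hxA)⟩
    obtain ⟨c, hcX, hc⟩ := hAC X hXsub hXfin hXne
    refine ⟨c, hcX, valencyLE_mono G c n ?_ hc⟩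
    intro x hx hadj
    rcases hx with hxB | hxX
    · by_cases hxA : x ∈ A
      · exact Or.inl hxA
      · exact absurd hadj (fun h => hfree x ⟨hxB, hxA⟩ c (hXsub hcX) h.symm)
    · exact Or.inr hxX
  · intro X hX hXfin hXne
    have hAsubC : A ⊆ C := hA ▸ Set.inter_subset_right
    have hXsub : X ⊆ B \ A := fun x hx =>
      ⟨(hX hx).1.resolve_right (hX hx).2, fun hxA => (hX hx).2 (hAsubC hxA)⟩
    obtain ⟨c, hcX, hc⟩ := hAB X hXsub hXfin hXne
    refine ⟨c, hcX, valencyLE_mono G c n ?_ hc⟩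
    intro x hx hadj
    rcases hx with hxC | hxX
    · by_cases hxA : x ∈ A
      · exact Or.inl hxA
      · exact absurd hadj (hfree c (hXsub hcX) x ⟨hxC, hxA⟩)
    · exact Or.inr hxX
end

section
/- Let n be a natural number and let A ⊆ B be finite graphs such that B is n-open but B is not n-open over A, i.e. there is a nonempty subset C₀ ⊆ B ∖ A such that every vertex of C₀ has valency at least n+1 in A ∪ C₀. Then no finite n-open graph C containing A contains n+1 subsets B₀, …, Bₙ such that B_i ∩ B_j = A for all i ≠ j and, for each i, the induced subgraph on B_i is isomorphic to B via a graph isomorphism fixing A pointwise. That is, every finite n-open graph contains at most n copies of B over A that pairwise intersect exactly in A. -/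
theorem stmt1 {V : Type*} (G H : SimpleGraph V) (n : ℕ) (A B : Set V)
    (hAB : A ⊆ B) (hBfin : B.Finite) (hBopen : nOpen G n B)
    -- B is not n-open over A, witnessed by C₀:
    (C0 : Set V) (hC0 : C0 ⊆ B \ A) (hC0ne : C0.Nonempty)
    (hclosed : ∀ c ∈ C0, (n + 1 : ℕ∞) ≤ {x ∈ A ∪ C0 | G.Adj c x}.encard)
    -- C is a finite n-open graph containing A:
    (C : Set V) (hCfin : C.Finite) (hCopen : nOpen H n C) (hAC : A ⊆ C)
    -- containing n+1 copies of B over A pairwise intersecting in A: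
    (Bi : Fin (n + 1) → Set V) (hBiC : ∀ i, Bi i ⊆ C)
    (hinter : ∀ i j, i ≠ j → Bi i ∩ Bi j = A)
    (hiso : ∀ i, ∃ f : V → V, Set.BijOn f B (Bi i) ∧ (∀ a ∈ A, f a = a) ∧
        ∀ x ∈ B, ∀ y ∈ B, (G.Adj x y ↔ H.Adj (f x) (f y))) :
    False := by
  classical
  choose f hbij hfix hadj using hiso
  have hC0B : C0 ⊆ B := fun x hx => (hC0 hx).1
  -- f i c ∉ A for c ∈ C0
  have himgA : ∀ i, ∀ c ∈ C0, f i c ∉ A := by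
    intro i c hc ha
    have h1 : f i (f i c) = f i c := hfix i _ ha
    have h2 : f i c = c := (hbij i).injOn (hAB ha) (hC0B hc) h1
    exact (hC0 hc).2 (h2 ▸ ha)
  set A' : Set V := {a ∈ A | ∃ c ∈ C0, G.Adj a c} with hA'def
  set D : Set V := A' ∪ ⋃ i, f i '' C0 with hDdef
  have hDC : D ⊆ C := by
    rintro x (hx | hx)
    · exact hAC hx.1
    · obtain ⟨_, ⟨i, rfl⟩, c, hc, rfl⟩ := hx
      exact hBiC i ((hbij i).mapsTo (hC0B hc))
  have hDfin : D.Finite := by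
    apply Set.Finite.union (hCfin.subset (fun x hx => hAC hx.1))
    exact Set.finite_iUnion (fun i => ((hBfin.subset hC0B).image _))
  have hDne : D.Nonempty := by
    obtain ⟨c, hc⟩ := hC0ne
    exact ⟨f 0 c, Or.inr (Set.mem_iUnion.mpr ⟨0, ⟨c, hc, rfl⟩⟩)⟩
  obtain ⟨d, hdD, hdval⟩ := hCopen D hDC hDfin hDne
  have hcontra : (n + 1 : ℕ∞) ≤ ({x ∈ D | H.Adj d x}).encard := by
    rcases hdD with hdA | hdU
    · -- d ∈ A', has a neighbour in each copy of C0
      obtain ⟨hdA, c0, hc0, hadj0⟩ := hdA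
      have hginj : Function.Injective (fun i : Fin (n+1) => f i c0) := by
        intro i j hij
        by_contra hne
        have h1 : f i c0 ∈ Bi i := (hbij i).mapsTo (hC0B hc0)
        have h2 : f j c0 ∈ Bi j := (hbij j).mapsTo (hC0B hc0)
        have hij' : f i c0 = f j c0 := hij
        have : f i c0 ∈ Bi i ∩ Bi j := ⟨h1, hij' ▸ h2⟩
        rw [hinter i j hne] at this
        exact himgA i c0 hc0 this
      have hsub : Set.range (fun i : Fin (n+1) => f i c0) ⊆ {x ∈ D | H.Adj d x} := by
        rintro _ ⟨i, rfl⟩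
        refine ⟨Or.inr (Set.mem_iUnion.mpr ⟨i, ⟨c0, hc0, rfl⟩⟩), ?_⟩
        have := (hadj i d (hAB hdA) c0 (hC0B hc0)).mp hadj0
        rwa [hfix i d hdA] at this
      calc (n + 1 : ℕ∞) = (Set.range (fun i : Fin (n+1) => f i c0)).encard := by
            rw [← Set.image_univ, Set.InjOn.encard_image (hginj.injOn)]
            simp [Set.encard_univ]
        _ ≤ _ := Set.encard_mono hsub
    · -- d = f i c for some c ∈ C0
      obtain ⟨_, ⟨i, rfl⟩, c, hc, rfl⟩ := hdU
      have hsubB : {x ∈ A ∪ C0 | G.Adj c x} ⊆ B := by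
        rintro x ⟨hx | hx, _⟩
        · exact hAB hx
        · exact hC0B hx
      have hsub : f i '' {x ∈ A ∪ C0 | G.Adj c x} ⊆ {x ∈ D | H.Adj (f i c) x} := by
        rintro _ ⟨x, ⟨hxAC, hGxc⟩, rfl⟩
        constructor
        · rcases hxAC with hx | hx
          · rw [hfix i x hx]
            exact Or.inl ⟨hx, c, hc, hGxc.symm⟩
          · exact Or.inr (Set.mem_iUnion.mpr ⟨i, ⟨x, hx, rfl⟩⟩)
        · exact (hadj i c (hC0B hc) x (hsubB ⟨hxAC, hGxc⟩)).mp hGxc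
      calc (n + 1 : ℕ∞) ≤ {x ∈ A ∪ C0 | G.Adj c x}.encard := hclosed c hc
        _ = (f i '' {x ∈ A ∪ C0 | G.Adj c x}).encard :=
            (Set.InjOn.encard_image ((hbij i).injOn.mono hsubB)).symm
        _ ≤ _ := Set.encard_mono hsub
  have : (n + 1 : ℕ∞) ≤ n := le_trans hcontra hdval
  rw [show ((n : ℕ∞) + 1) = ((n + 1 : ℕ) : ℕ∞) by push_cast; ring, Nat.cast_le] at this
  omega
end

section
/- Let n be a natural number, let C be a graph every finite subset of which is n-open, let A ⊆ C be such that A ≤ₙ C, and let c ∈ C ∖ A be a vertex having exactly n neighbours in A. Then A ∪ {c} ≤ₙ C. -/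
/-!
Given a finite `D` outside `A ∪ {c}`, apply `A ≤ₙ C` to `D ∪ {c}`. If the vertex found lies in `D`
we are done. Otherwise it is `c`, whose `n` neighbours in `A` already exhaust its allowance, so `c`
has no neighbour in `D`; then the vertex that `A ≤ₙ C` provides for `D` itself does not see `c`, and
its valency in `A ∪ {c} ∪ D` is its valency in `A ∪ D`.
-/

section

variable {V : Type*} {G : SimpleGraph V} {n : ℕ} {v : V} {X Y : Set V}

theorem valencyLE.of_adj_mem (h : valencyLE G v X n) (hY : ∀ x ∈ Y, G.Adj v x → x ∈ X) :
    valencyLE G v Y n :=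
  (Set.encard_le_encard (t := {x ∈ X | G.Adj v x}) fun x hx => ⟨hY x hx.1 hx.2, hx.2⟩).trans h

theorem valencyLE.mono (h : valencyLE G v X n) (hXY : Y ⊆ X) : valencyLE G v Y n :=
  h.of_adj_mem fun _ hx _ => hXY hx

theorem not_adj_of_valencyLE_union {A D : Set V} (hval : {x ∈ A | G.Adj v x}.encard = n)
    (hAD : Disjoint A D) (h : valencyLE G v (A ∪ D) n) {x : V} (hx : x ∈ D) : ¬ G.Adj v x := by
  intro hvx
  have hxA : x ∉ {y ∈ A | G.Adj v y} := fun hx' => Set.disjoint_left.1 hAD hx'.1 hx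
  have hsub : insert x {y ∈ A | G.Adj v y} ⊆ {y ∈ A ∪ D | G.Adj v y} := by
    rintro y (rfl | ⟨hy, hvy⟩)
    exacts [⟨Or.inr hx, hvx⟩, ⟨Or.inl hy, hvy⟩]
  have : (n : ℕ∞) + 1 ≤ n := by
    calc (n : ℕ∞) + 1 = (insert x {y ∈ A | G.Adj v y}).encard := by
          rw [Set.encard_insert_of_notMem hxA, hval]
      _ ≤ n := (Set.encard_le_encard hsub).trans h
  norm_cast at this
  omega

theorem nOpenOver.union_singleton {A B : Set V} (hA : nOpenOver G n A B) {c : V}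
    (hc : c ∈ B \ A) (hval : {x ∈ A | G.Adj c x}.encard = n) :
    nOpenOver G n (A ∪ {c}) B := by
  intro D hD hfin hne
  have hDA : D ⊆ B \ A := fun x hx => ⟨(hD hx).1, fun h => (hD hx).2 (Or.inl h)⟩
  obtain ⟨d, hd | rfl, hd_val⟩ := hA (D ∪ {c}) (Set.union_subset hDA (by simpa using hc))
    (hfin.union (Set.finite_singleton c)) ⟨c, Or.inr rfl⟩
  · exact ⟨d, hd, hd_val.mono fun x => by simp only [Set.mem_union]; tauto⟩
  · have hAD : Disjoint A D := Set.disjoint_right.2 fun x hx => (hDA hx).2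
    have hno_adj : ∀ x ∈ D, ¬ G.Adj d x := fun x hx =>
      not_adj_of_valencyLE_union hval hAD
        (hd_val.mono fun y => by simp only [Set.mem_union]; tauto) hx
    obtain ⟨e, he, he_val⟩ := hA D hDA hfin hne
    refine ⟨e, he, he_val.of_adj_mem ?_⟩
    rintro x ((hx | rfl) | hx) hex
    exacts [Or.inl hx, absurd hex.symm (hno_adj e he), Or.inr hx]

end

theorem stmt2_general {V : Type*} (G : SimpleGraph V) (n : ℕ)
    (A : Set V) (hA : nOpenOver G n A Set.univ)
    (c : V) (hc : c ∉ A)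
    (hval : {x ∈ A | G.Adj c x}.encard = n) :
    nOpenOver G n (A ∪ {c}) Set.univ :=
  hA.union_singleton ⟨trivial, hc⟩ hval

/-- The graph `G` (playing the role of `C`) has every finite subset `n`-open,
`A ≤ₙ C`, and `c ∈ C ∖ A` has exactly `n` neighbours in `A`; then `A ∪ {c} ≤ₙ C`. -/
theorem stmt2 {V : Type*} (G : SimpleGraph V) (n : ℕ)
    (hopen : nOpen G n Set.univ)
    (A : Set V) (hA : nOpenOver G n A Set.univ)
    (c : V) (hc : c ∉ A)
    (hval : {x ∈ A | G.Adj c x}.encard = n) :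
    nOpenOver G n (A ∪ {c}) Set.univ :=
  stmt2_general G n A hA c hc hval
end

section
/- Fix integers k, n with 2 ≤ k < n. Let C be a partial (k,n)-Steiner system every finite subset of which is open, let A ⊆ C be such that A ≤_o C, and let c ∈ C ∖ A be such that either c is a point incident with exactly one block of A, or c is a block incident with exactly k points of A. Then A ∪ {c} ≤_o C. -/
namespace Steiner

variable {P L : Type}

/-- The blocks of `X` incident with the point `p`. -/
def blocksIn (I : P → L → Prop) (X : Set (P ⊕ L)) (p : P) : Set L :=
  {b : L | Sum.inr b ∈ X ∧ I p b}

/-- The points of `X` incident with the block `b`. -/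
def pointsIn (I : P → L → Prop) (X : Set (P ⊕ L)) (b : L) : Set P :=
  {p : P | Sum.inl p ∈ X ∧ I p b}

/-- An element is hyperfree in `X` if it is a point incident with at most one block of `X`,
or a block incident with at most `k` points of `X`. -/
def Hyperfree (k : ℕ) (I : P → L → Prop) (X : Set (P ⊕ L)) : (P ⊕ L) → Prop
  | Sum.inl p => (blocksIn I X p).encard ≤ 1
  | Sum.inr b => (pointsIn I X b).encard ≤ k

/-- `B` is open over `A`: every nonempty finite subset `C` of `B \ A` contains an element
that is hyperfree in `A ∪ C`. -/
def OpenOver (k : ℕ) (I : P → L → Prop) (A B : Set (P ⊕ L)) : Prop :=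
  ∀ C : Set (P ⊕ L), C ⊆ B \ A → C.Finite → C.Nonempty →
    ∃ c ∈ C, Hyperfree k I (A ∪ C) c

/-- `B` is open: every nonempty finite subset `C` of `B` contains an element hyperfree in `C`. -/
def IsOpen (k : ℕ) (I : P → L → Prop) (B : Set (P ⊕ L)) : Prop :=
  ∀ C : Set (P ⊕ L), C ⊆ B → C.Finite → C.Nonempty →
    ∃ c ∈ C, Hyperfree k I C c

/-- `X` with the incidence relation `I` is a partial `(k,n)`-Steiner system: any `k` distinct
points of `X` are incident with at most one common block of `X`, and every block of `X` is
incident with at most `n` points of `X`. -/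
def IsPartial (k n : ℕ) (I : P → L → Prop) (X : Set (P ⊕ L)) : Prop :=
  (∀ S : Set P, (∀ p ∈ S, Sum.inl p ∈ X) → S.encard = k →
    ∀ b b' : L, Sum.inr b ∈ X → Sum.inr b' ∈ X →
      (∀ p ∈ S, I p b) → (∀ p ∈ S, I p b') → b = b') ∧
  (∀ b : L, Sum.inr b ∈ X → (pointsIn I X b).encard ≤ n)

end Steiner

/-! Apply openness of `C` over `A` to `C ∪ {c}`. If the hyperfree element found is not `c`, it
already works for `A ∪ {c}`. If it is `c`, then `c` already has its maximal number of neighbours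
in `A`, so it is incident with nothing in `C`; an element of `C` hyperfree in `A ∪ C` then stays
hyperfree after adding `c`. -/

namespace Steiner

variable {P L : Type} {k : ℕ} {I : P → L → Prop}

def Incident (I : P → L → Prop) : P ⊕ L → P ⊕ L → Prop
  | Sum.inl p, Sum.inr b => I p b
  | Sum.inr b, Sum.inl p => I p b
  | _, _ => False

/-- `c` already has in `A` the largest number of neighbours that hyperfreeness allows. -/
def Saturated (k : ℕ) (I : P → L → Prop) (A : Set (P ⊕ L)) : P ⊕ L → Prop
  | Sum.inl p => (blocksIn I A p).encard = 1
  | Sum.inr b => (pointsIn I A b).encard = k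

lemma blocksIn_mono {X Y : Set (P ⊕ L)} (h : X ⊆ Y) (p : P) :
    blocksIn I X p ⊆ blocksIn I Y p := fun _ hb => ⟨h hb.1, hb.2⟩

lemma pointsIn_mono {X Y : Set (P ⊕ L)} (h : X ⊆ Y) (b : L) :
    pointsIn I X b ⊆ pointsIn I Y b := fun _ hp => ⟨h hp.1, hp.2⟩

lemma Hyperfree.union_singleton {X : Set (P ⊕ L)} {c d : P ⊕ L} (hcd : ¬ Incident I c d)
    (hd : Hyperfree k I X d) : Hyperfree k I (X ∪ {c}) d := by
  cases d with
  | inl q =>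
    have : blocksIn I (X ∪ {c}) q = blocksIn I X q := by
      ext b
      cases c <;> simp only [blocksIn, Incident] at hcd ⊢ <;> aesop
    simpa only [Hyperfree, this] using hd
  | inr b =>
    have : pointsIn I (X ∪ {c}) b = pointsIn I X b := by
      ext q
      cases c <;> simp only [pointsIn, Incident] at hcd ⊢ <;> aesop
    simpa only [Hyperfree, this] using hd

lemma Saturated.mem_of_incident {A Y : Set (P ⊕ L)} {c d : P ⊕ L} (hc : Saturated k I A c)
    (hAY : A ⊆ Y) (hfree : Hyperfree k I Y c) (hd : d ∈ Y) (hcd : Incident I c d) : d ∈ A := by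
  cases c with
  | inl p =>
    obtain _ | b := d
    · exact hcd.elim
    have heq : blocksIn I A p = blocksIn I Y p :=
      (Set.finite_of_encard_eq_coe hc).eq_of_subset_of_encard_le (blocksIn_mono hAY p) (hc ▸ hfree)
    exact (heq.ge ⟨hd, hcd⟩).1
  | inr b =>
    obtain q | _ := d
    · have heq : pointsIn I A b = pointsIn I Y b :=
        (Set.finite_of_encard_eq_coe hc).eq_of_subset_of_encard_le (pointsIn_mono hAY b)
          (hc ▸ hfree)
      exact (heq.ge ⟨hd, hcd⟩).1
    · exact hcd.elim

lemma OpenOver.union_singleton_of_saturated {A B : Set (P ⊕ L)} {c : P ⊕ L}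
    (hA : OpenOver k I A B) (hcB : c ∈ B \ A) (hc : Saturated k I A c) :
    OpenOver k I (A ∪ {c}) B := by
  intro C hC hCfin hCne
  have hCA : C ⊆ B \ A := fun x hx => ⟨(hC hx).1, fun hxA => (hC hx).2 (Or.inl hxA)⟩
  have hCc : C ∪ {c} ⊆ B \ A := Set.union_subset hCA (Set.singleton_subset_iff.2 hcB)
  obtain ⟨d, hd, hfree⟩ := hA (C ∪ {c}) hCc (hCfin.union (Set.finite_singleton c)) ⟨c, Or.inr rfl⟩
  have hunion : A ∪ (C ∪ {c}) = A ∪ {c} ∪ C := by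
    rw [Set.union_assoc, Set.union_comm C]
  rcases hd with hdC | rfl
  · exact ⟨d, hdC, hunion ▸ hfree⟩
  obtain ⟨d', hd', hfree'⟩ := hA C hCA hCfin hCne
  have hcd' : ¬ Incident I d d' := fun h =>
    (hCA hd').2 (hc.mem_of_incident Set.subset_union_left hfree (Or.inr (Or.inl hd')) h)
  refine ⟨d', hd', ?_⟩
  rw [Set.union_right_comm]
  exact hfree'.union_singleton hcd'

end Steiner

open Steiner

theorem stmt6_general {P L : Type} (k : ℕ)
    (I : P → L → Prop)
    (A : Set (P ⊕ L)) (hA : OpenOver k I A Set.univ)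
    (c : P ⊕ L) (hc : c ∉ A)
    (hcase :
      (∃ p : P, c = Sum.inl p ∧ (blocksIn I A p).encard = 1) ∨
      (∃ b : L, c = Sum.inr b ∧ (pointsIn I A b).encard = k)) :
    OpenOver k I (A ∪ {c}) Set.univ := by
  have hsat : Saturated k I A c := by
    rcases hcase with ⟨p, rfl, hp⟩ | ⟨b, rfl, hb⟩
    exacts [hp, hb]
  exact hA.union_singleton_of_saturated ⟨trivial, hc⟩ hsat

theorem stmt6 {P L : Type} (k n : ℕ) (hk : 2 ≤ k) (hkn : k < n)
    (I : P → L → Prop)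
    (hpartial : IsPartial k n I (Set.univ : Set (P ⊕ L)))
    (hopen : IsOpen k I (Set.univ : Set (P ⊕ L)))
    (A : Set (P ⊕ L)) (hA : OpenOver k I A Set.univ)
    (c : P ⊕ L) (hc : c ∉ A)
    (hcase :
      (∃ p : P, c = Sum.inl p ∧ (blocksIn I A p).encard = 1) ∨
      (∃ b : L, c = Sum.inr b ∧ (pointsIn I A b).encard = k)) :
    OpenOver k I (A ∪ {c}) Set.univ :=
  stmt6_general k I A hA c hc hcase
end

section
/- Fix integers k, n with 2 ≤ k < n. Let B and C be finite open partial (k,n)-Steiner systems whose intersection A = B ∩ C is a common substructure (the incidence relations of B and C agree on A), with A ≤_o B and A ≤_o C. Then there exist a finite open partial (k,n)-Steiner system D and embeddings f : B → D and g : C → D with f↾A = g↾A such that f(B) ≤_o D and g(C) ≤_o D. In particular, the class of finite open partial (k,n)-Steiner systems with the relation ≤_o has the amalgamation and joint embedding properties. -/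
open Steiner

/-!
Start from a copy of `B` and add the elements of `C \ A` one at a time, in an order in which each
is hyperfree over `A` and its predecessors (such an order exists because `A ≤_o C`). A new point
lies on at most one earlier block `b`: it becomes a fresh point on the image of `b`, unless that
image already has `n` points; then, by counting, the image of `b` has a point outside the image of
`C`, and the new point is identified with it. A new block has at most `k` earlier points: if it
has exactly `k` and some block of the amalgam already passes through their images, the Steiner
property forces identifying the new block with that one; otherwise it becomes a fresh block.
Fresh elements are hyperfree in every set, and identified elements already have their full quota
of neighbours in the image of `C`, so both images stay open in the amalgam at every step; the
amalgam itself is then open because `B` is.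
-/

open Set Function

namespace Steiner

variable {P L : Type} {k n : ℕ}

section Hyperfree

variable {I J : P → L → Prop} {X Y E D : Set (P ⊕ L)} {x : P ⊕ L}

def Adj (I : P → L → Prop) : P ⊕ L → P ⊕ L → Prop
  | .inl p, .inr b => I p b
  | .inr b, .inl p => I p b
  | _, _ => False

def nbhd (I : P → L → Prop) (X : Set (P ⊕ L)) (x : P ⊕ L) : Set (P ⊕ L) :=
  {y ∈ X | Adj I x y}

def freeBound (k : ℕ) : P ⊕ L → ℕ∞
  | .inl _ => 1
  | .inr _ => k

theorem Adj.symm {y : P ⊕ L} (h : Adj I x y) : Adj I y x := by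
  cases x <;> cases y <;> exact h

theorem freeBound_ne_top (k : ℕ) (x : P ⊕ L) : freeBound k x ≠ ⊤ := by
  cases x <;> simp [freeBound]

theorem nbhd_mono (h : X ⊆ Y) : nbhd I X x ⊆ nbhd I Y x :=
  fun _ hy => ⟨h hy.1, hy.2⟩

theorem nbhd_subset : nbhd I X x ⊆ X :=
  fun _ hy => hy.1

theorem blocksIn_insert_inl {p q : P} : blocksIn I (insert (.inl p) X) q = blocksIn I X q := by
  ext; simp [blocksIn]

theorem pointsIn_insert_inr {b c : L} : pointsIn I (insert (.inr b) X) c = pointsIn I X c := by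
  ext; simp [pointsIn]

theorem hyperfree_iff : Hyperfree k I X x ↔ (nbhd I X x).encard ≤ freeBound k x := by
  cases x with
  | inl p =>
    have : nbhd I X (.inl p) = Sum.inr '' blocksIn I X p := by
      ext (q | b) <;> simp [nbhd, Adj, blocksIn]
    rw [this, Sum.inr_injective.encard_image]; rfl
  | inr b =>
    have : nbhd I X (.inr b) = Sum.inl '' pointsIn I X b := by
      ext (q | c) <;> simp [nbhd, Adj, pointsIn]
    rw [this, Sum.inl_injective.encard_image]; rfl

theorem Hyperfree.of_nbhd_subset (h : Hyperfree k I X x) (hsub : nbhd J Y x ⊆ nbhd I X x) :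
    Hyperfree k J Y x :=
  hyperfree_iff.2 ((encard_le_encard hsub).trans (hyperfree_iff.1 h))

theorem Hyperfree.mono (h : Hyperfree k I Y x) (hXY : X ⊆ Y) : Hyperfree k I X x :=
  h.of_nbhd_subset (nbhd_mono hXY)

theorem isOpen_iff_openOver_empty : IsOpen k I X ↔ OpenOver k I ∅ X := by
  simp [IsOpen, OpenOver]

theorem openOver_self : OpenOver k I X X :=
  fun _ hY _ ⟨_, hy⟩ => absurd (hY hy).1 (hY hy).2

theorem OpenOver.hyperfree_insert (h : OpenOver k I E D) (hxD : x ∈ D) (hxE : x ∉ E) :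
    Hyperfree k I (insert x E) x := by
  obtain ⟨c, rfl, hc⟩ := h {x} (singleton_subset_iff.2 ⟨hxD, hxE⟩) (finite_singleton x)
    (singleton_nonempty x)
  rwa [union_singleton] at hc

theorem IsOpen.of_openOver (hE : IsOpen k I E) (h : OpenOver k I E D) : IsOpen k I D := by
  intro Y hYD hY hYne
  by_cases hYE : Y ⊆ E
  · exact hE Y hYE hY hYne
  obtain ⟨c, hc, hfree⟩ := h (Y \ E) (sdiff_subset_sdiff_left hYD) hY.sdiff (sdiff_nonempty.2 hYE)
  exact ⟨c, hc.1, hfree.mono (by simp)⟩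

theorem nbhd_subset_of_saturated (hsat : freeBound k x ≤ (nbhd I E x).encard) (hEY : E ⊆ Y)
    (hfree : Hyperfree k I Y x) : nbhd I Y x ⊆ E := by
  have hY : (nbhd I Y x).encard ≤ (freeBound k x).toNat := by
    rw [ENat.natCast_toNat (freeBound_ne_top k x)]; exact hyperfree_iff.1 hfree
  have hsub : nbhd I E x ⊆ nbhd I Y x := nbhd_mono hEY
  have heq := ((finite_of_encard_le_coe hY).subset hsub).eq_of_subset_of_encard_le hsub
    (hY.trans ((ENat.natCast_toNat (freeBound_ne_top k x)).trans_le hsat))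
  exact fun y hy => (heq ▸ hy).1

theorem OpenOver.insert_of_saturated (h : OpenOver k I E D) (hxD : x ∈ D) (hxE : x ∉ E)
    (hsat : freeBound k x ≤ (nbhd I E x).encard) : OpenOver k I (insert x E) D := by
  intro Y hY hYfin hYne
  have hYD : Y ⊆ D \ E := fun y hy => ⟨(hY hy).1, fun h => (hY hy).2 (mem_insert_of_mem _ h)⟩
  obtain ⟨c, hc, hfree⟩ := h (insert x Y) (insert_subset ⟨hxD, hxE⟩ hYD) (hYfin.insert x)
    (insert_nonempty _ _)
  rw [union_insert, ← insert_union] at hfree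
  rcases hc with rfl | hc
  · have hcY : ∀ y ∈ Y, ¬ Adj I c y := fun y hy hadj =>
      (hYD hy).2 (nbhd_subset_of_saturated hsat (subset_insert _ _ |>.trans subset_union_left)
        hfree ⟨mem_union_right _ hy, hadj⟩)
    obtain ⟨c', hc', hfree'⟩ := h Y hYD hYfin hYne
    refine ⟨c', hc', hfree'.of_nbhd_subset ?_⟩
    rintro z ⟨(rfl | hz) | hz, hadj⟩
    · exact absurd hadj.symm (hcY c' hc')
    · exact ⟨Or.inl hz, hadj⟩
    · exact ⟨Or.inr hz, hadj⟩
  · exact ⟨c, hc, hfree⟩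

theorem OpenOver.insert_right (h : OpenOver k I E D) (hxE : x ∉ E)
    (hfree : ∀ Z, Hyperfree k J Z x) (hJ : ∀ y z, Adj J y z → y ≠ x → z ≠ x → Adj I y z) :
    OpenOver k J E (insert x D) := by
  intro Y hY hYfin hYne
  by_cases hxY : x ∈ Y
  · exact ⟨x, hxY, hfree _⟩
  have hYD : Y ⊆ D \ E := fun y hy =>
    ⟨(hY hy).1.resolve_left (ne_of_mem_of_not_mem hy hxY), (hY hy).2⟩
  obtain ⟨c, hc, hc'⟩ := h Y hYD hYfin hYne
  refine ⟨c, hc, hc'.of_nbhd_subset fun z hz =>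
    ⟨hz.1, hJ c z hz.2 (ne_of_mem_of_not_mem hc hxY) ?_⟩⟩
  rintro rfl
  exact hz.1.elim hxE hxY

theorem OpenOver.insert_insert (h : OpenOver k I E D) (hN : ∀ y, Adj J x y → y ∈ E)
    (hJ : ∀ y z, Adj J y z → y ≠ x → z ≠ x → Adj I y z) :
    OpenOver k J (insert x E) (insert x D) := by
  intro Y hY hYfin hYne
  have hxY : x ∉ Y := fun h => (hY h).2 (mem_insert _ _)
  have hYD : Y ⊆ D \ E := fun y hy =>
    ⟨(hY hy).1.resolve_left (ne_of_mem_of_not_mem hy hxY),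
      fun h => (hY hy).2 (mem_insert_of_mem _ h)⟩
  obtain ⟨c, hc, hfree⟩ := h Y hYD hYfin hYne
  refine ⟨c, hc, hfree.of_nbhd_subset ?_⟩
  rintro z ⟨hz, hadj⟩
  have hzx : z ≠ x := by
    rintro rfl
    exact (hYD hc).2 (hN c hadj.symm)
  refine ⟨?_, hJ c z hadj (ne_of_mem_of_not_mem hc hxY) hzx⟩
  rcases hz with (rfl | hz) | hz
  exacts [absurd rfl hzx, Or.inl hz, Or.inr hz]

theorem OpenOver.induction_on {A C : Set (P ⊕ L)} {motive : Set (P ⊕ L) → Prop}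
    (h : OpenOver k I A C) (hfin : (C \ A).Finite) (base : motive A)
    (step : ∀ X x, A ⊆ X → X ⊆ C → x ∈ C \ X → Hyperfree k I (insert x X) x →
      motive X → motive (insert x X))
    {X : Set (P ⊕ L)} (hAX : A ⊆ X) (hXC : X ⊆ C) : motive X := by
  have hXfin : (X \ A).Finite := hfin.subset (sdiff_subset_sdiff_left hXC)
  induction hm : (X \ A).ncard generalizing X with
  | zero =>
    obtain rfl : X = A := (sdiff_eq_empty.1 ((ncard_eq_zero hXfin).1 hm)).antisymm hAX
    exact base
  | succ m ih =>
    obtain ⟨c, hc, hfree⟩ := h (X \ A) (sdiff_subset_sdiff_left hXC) hXfin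
      (nonempty_of_ncard_ne_zero (by omega))
    rw [union_sdiff_cancel hAX, ← insert_sdiff_self_of_mem hc.1] at hfree
    rw [← insert_sdiff_self_of_mem hc.1]
    refine step _ c (subset_sdiff_singleton hAX hc.2) (sdiff_subset.trans hXC) ⟨hXC hc.1, by simp⟩
      hfree (ih (subset_sdiff_singleton hAX hc.2) (sdiff_subset.trans hXC) (hXfin.subset ?_) ?_)
    · exact sdiff_subset_sdiff_left sdiff_subset
    · rw [sdiff_right_comm, ncard_sdiff_singleton_of_mem hc, hm, Nat.add_sub_cancel]

end Hyperfree

section Embedding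

variable {P' L' : Type} {I : P → L → Prop} {I' I'' : P' → L' → Prop} {A X Z : Set (P ⊕ L)}
  {D D' : Set (P' ⊕ L')} {fp : P → P'} {fl : L → L'} {x : P ⊕ L}

structure IsEmbedding (I : P → L → Prop) (I' : P' → L' → Prop) (X : Set (P ⊕ L))
    (D : Set (P' ⊕ L')) (fp : P → P') (fl : L → L') : Prop where
  mapsTo : MapsTo (Sum.map fp fl) X D
  injOn : InjOn (Sum.map fp fl) X
  incid_iff : ∀ p b, Sum.inl p ∈ X → Sum.inr b ∈ X → (I' (fp p) (fl b) ↔ I p b)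

namespace IsEmbedding

theorem adj_iff (e : IsEmbedding I I' X D fp fl) {y : P ⊕ L} (hx : x ∈ X) (hy : y ∈ X) :
    Adj I' (Sum.map fp fl x) (Sum.map fp fl y) ↔ Adj I x y := by
  cases x <;> cases y
  exacts [Iff.rfl, e.incid_iff _ _ hx hy, e.incid_iff _ _ hy hx, Iff.rfl]

theorem nbhd_image (e : IsEmbedding I I' X D fp fl) (hZ : Z ⊆ X) (hx : x ∈ X) :
    nbhd I' (Sum.map fp fl '' Z) (Sum.map fp fl x) = Sum.map fp fl '' nbhd I Z x := by
  ext w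
  constructor
  · rintro ⟨⟨z, hz, rfl⟩, hadj⟩
    exact ⟨z, ⟨hz, (e.adj_iff hx (hZ hz)).1 hadj⟩, rfl⟩
  · rintro ⟨z, ⟨hz, hadj⟩, rfl⟩
    exact ⟨⟨z, hz, rfl⟩, (e.adj_iff hx (hZ hz)).2 hadj⟩

theorem hyperfree_image_iff (e : IsEmbedding I I' X D fp fl) (hZ : Z ⊆ X) (hx : x ∈ X) :
    Hyperfree k I' (Sum.map fp fl '' Z) (Sum.map fp fl x) ↔ Hyperfree k I Z x := by
  rw [hyperfree_iff, hyperfree_iff, e.nbhd_image hZ hx,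
    (e.injOn.mono (nbhd_subset.trans hZ)).encard_image]
  cases x <;> rfl

theorem injOn_inl (e : IsEmbedding I I' X D fp fl) : InjOn fp {p | Sum.inl p ∈ X} :=
  fun _ hp _ hq h => Sum.inl.inj (e.injOn hp hq (congrArg Sum.inl h))

theorem injOn_inr (e : IsEmbedding I I' X D fp fl) : InjOn fl {b | Sum.inr b ∈ X} :=
  fun _ hb _ hc h => Sum.inr.inj (e.injOn hb hc (congrArg Sum.inr h))

theorem mono (e : IsEmbedding I I' X D fp fl) (hD : D ⊆ D')
    (hI : ∀ p b, Sum.inl p ∈ D → Sum.inr b ∈ D → (I'' p b ↔ I' p b)) :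
    IsEmbedding I I'' X D' fp fl :=
  ⟨e.mapsTo.mono_right hD, e.injOn, fun p b hp hb =>
    (hI _ _ (e.mapsTo hp) (e.mapsTo hb)).trans (e.incid_iff p b hp hb)⟩

end IsEmbedding

theorem OpenOver.image (h : OpenOver k I A X) (hAX : A ⊆ X) (e : IsEmbedding I I' X D fp fl) :
    OpenOver k I' (Sum.map fp fl '' A) (Sum.map fp fl '' X) := by
  intro Y hY hYfin hYne
  set Z := {z ∈ X | Sum.map fp fl z ∈ Y}
  have hZX : Z ⊆ X := sep_subset _ _
  have hZY : Sum.map fp fl '' Z = Y := by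
    refine (image_subset_iff.2 fun z hz => hz.2).antisymm fun w hw => ?_
    obtain ⟨z, hz, rfl⟩ := (hY hw).1
    exact ⟨z, ⟨hz, hw⟩, rfl⟩
  obtain ⟨c, hc, hfree⟩ := h Z (fun z hz => ⟨hz.1, fun hzA => (hY hz.2).2 ⟨z, hzA, rfl⟩⟩)
    ((hZY ▸ hYfin).of_finite_image (e.injOn.mono hZX)) (hZY ▸ hYne).of_image
  refine ⟨_, hZY ▸ mem_image_of_mem _ hc, ?_⟩
  rw [← hZY, ← image_union]
  exact (e.hyperfree_image_iff (union_subset hAX hZX) (hZX hc)).2 hfree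

theorem IsOpen.image (h : IsOpen k I X) (e : IsEmbedding I I' X D fp fl) :
    IsOpen k I' (Sum.map fp fl '' X) := by
  rw [isOpen_iff_openOver_empty] at h ⊢
  simpa using h.image (empty_subset X) e

theorem IsPartial.image (h : IsPartial k n I X) (e : IsEmbedding I I' X D fp fl) :
    IsPartial k n I' (Sum.map fp fl '' X) := by
  have inl_mem : ∀ {p'}, Sum.inl p' ∈ Sum.map fp fl '' X → ∃ p, Sum.inl p ∈ X ∧ fp p = p' := by
    rintro p' ⟨p | b, hz, h⟩ <;> simp only [Sum.map_inl, Sum.map_inr, Sum.inl.injEq,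
      reduceCtorEq] at h
    exact ⟨p, hz, h⟩
  have inr_mem : ∀ {b'}, Sum.inr b' ∈ Sum.map fp fl '' X → ∃ b, Sum.inr b ∈ X ∧ fl b = b' := by
    rintro b' ⟨p | b, hz, h⟩ <;> simp only [Sum.map_inl, Sum.map_inr, Sum.inr.injEq,
      reduceCtorEq] at h
    exact ⟨b, hz, h⟩
  refine ⟨fun S hS hSk β β' hβ hβ' hSβ hSβ' => ?_, fun β hβ => ?_⟩
  · obtain ⟨b, hb, rfl⟩ := inr_mem hβ
    obtain ⟨b', hb', rfl⟩ := inr_mem hβ'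
    set S₀ := {p | Sum.inl p ∈ X ∧ fp p ∈ S}
    have hS₀ : fp '' S₀ = S := by
      refine (image_subset_iff.2 fun p hp => hp.2).antisymm fun p' hp' => ?_
      obtain ⟨p, hp, rfl⟩ := inl_mem (hS p' hp')
      exact ⟨p, ⟨hp, hp'⟩, rfl⟩
    have hS₀k : S₀.encard = k := by
      rw [← (e.injOn_inl.mono fun _ hp => hp.1).encard_image, hS₀, hSk]
    rw [h.1 S₀ (fun p hp => hp.1) hS₀k b b' hb hb'
      (fun p hp => (e.incid_iff p b hp.1 hb).1 (hSβ _ hp.2))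
      (fun p hp => (e.incid_iff p b' hp.1 hb').1 (hSβ' _ hp.2))]
  · obtain ⟨b, hb, rfl⟩ := inr_mem hβ
    have hpts : pointsIn I' (Sum.map fp fl '' X) (fl b) ⊆ fp '' pointsIn I X b := by
      rintro p' ⟨hp', hinc⟩
      obtain ⟨p, hp, rfl⟩ := inl_mem hp'
      exact ⟨p, ⟨hp, (e.incid_iff p b hp hb).1 hinc⟩, rfl⟩
    exact (encard_le_encard hpts).trans ((encard_image_le _ _).trans (h.2 b hb))

theorem eqOn_map_update_inl [DecidableEq P] {p : P} (hp : Sum.inl p ∉ X) (y : P') :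
    EqOn (Sum.map (update fp p y) fl) (Sum.map fp fl) X := by
  rintro (q | b) hq
  · simp [update_of_ne (show q ≠ p by rintro rfl; exact hp hq)]
  · rfl

theorem eqOn_map_update_inr [DecidableEq L] {b : L} (hb : Sum.inr b ∉ X) (y : L') :
    EqOn (Sum.map fp (update fl b y)) (Sum.map fp fl) X := by
  rintro (q | c) hc
  · rfl
  · simp [update_of_ne (show c ≠ b by rintro rfl; exact hb hc)]

theorem image_map_update_insert_inl [DecidableEq P] {p : P} (hp : Sum.inl p ∉ X) (y : P') :
    Sum.map (update fp p y) fl '' insert (Sum.inl p) X =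
      insert (Sum.inl y) (Sum.map fp fl '' X) := by
  rw [image_insert_eq, (eqOn_map_update_inl hp y).image_eq]
  simp

theorem image_map_update_insert_inr [DecidableEq L] {b : L} (hb : Sum.inr b ∉ X) (y : L') :
    Sum.map fp (update fl b y) '' insert (Sum.inr b) X =
      insert (Sum.inr y) (Sum.map fp fl '' X) := by
  rw [image_insert_eq, (eqOn_map_update_inr hb y).image_eq]
  simp

theorem IsEmbedding.insert_inl [DecidableEq P] (e : IsEmbedding I I' X D fp fl) {p : P} {y : P'}
    (hp : Sum.inl p ∉ X) (hyD : Sum.inl y ∈ D) (hyX : Sum.inl y ∉ Sum.map fp fl '' X)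
    (hinc : ∀ b, Sum.inr b ∈ X → (I' y (fl b) ↔ I p b)) :
    IsEmbedding I I' (insert (Sum.inl p) X) D (update fp p y) fl where
  mapsTo := by
    rw [mapsTo_iff_image_subset, image_map_update_insert_inl hp]
    exact insert_subset hyD e.mapsTo.image_subset
  injOn := by
    rw [injOn_insert hp, (eqOn_map_update_inl hp y).injOn_iff, (eqOn_map_update_inl hp y).image_eq]
    exact ⟨e.injOn, by simpa using hyX⟩
  incid_iff q b hq hb := by
    have hb' : Sum.inr b ∈ X := hb.resolve_left (by simp)
    rcases hq with hq | hq
    · obtain rfl := Sum.inl.inj hq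
      simpa using hinc b hb'
    · rw [update_of_ne (show q ≠ p by rintro rfl; exact hp hq)]
      exact e.incid_iff q b hq hb'

theorem IsEmbedding.insert_inr [DecidableEq L] (e : IsEmbedding I I' X D fp fl) {b : L} {y : L'}
    (hb : Sum.inr b ∉ X) (hyD : Sum.inr y ∈ D) (hyX : Sum.inr y ∉ Sum.map fp fl '' X)
    (hinc : ∀ p, Sum.inl p ∈ X → (I' (fp p) y ↔ I p b)) :
    IsEmbedding I I' (insert (Sum.inr b) X) D fp (update fl b y) where
  mapsTo := by
    rw [mapsTo_iff_image_subset, image_map_update_insert_inr hb]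
    exact insert_subset hyD e.mapsTo.image_subset
  injOn := by
    rw [injOn_insert hb, (eqOn_map_update_inr hb y).injOn_iff, (eqOn_map_update_inr hb y).image_eq]
    exact ⟨e.injOn, by simpa using hyX⟩
  incid_iff q c hq hc := by
    have hq' : Sum.inl q ∈ X := hq.resolve_left (by simp)
    rcases hc with hc | hc
    · obtain rfl := Sum.inr.inj hc
      simpa using hinc q hq'
    · rw [update_of_ne (show c ≠ b by rintro rfl; exact hb hc)]
      exact e.incid_iff q c hq' hc

def mapIncidence (fp : P → P') (fl : L → L') (I : P → L → Prop) (X : Set (P ⊕ L)) :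
    P' → L' → Prop :=
  fun p' b' => ∃ p b, Sum.inl p ∈ X ∧ Sum.inr b ∈ X ∧ I p b ∧ fp p = p' ∧ fl b = b'

theorem isEmbedding_mapIncidence (hfp : Injective fp) (hfl : Injective fl) :
    IsEmbedding I (mapIncidence fp fl I X) X (Sum.map fp fl '' X) fp fl where
  mapsTo := mapsTo_image _ _
  injOn := (Sum.map_injective.2 ⟨hfp, hfl⟩).injOn
  incid_iff p b hp hb := by
    refine ⟨?_, fun h => ⟨p, b, hp, hb, h, rfl, rfl⟩⟩
    rintro ⟨p₀, b₀, -, -, h, hp₀, hb₀⟩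
    rwa [hfp hp₀, hfl hb₀] at h

theorem mapIncidence_mem {p' : P'} {b' : L'} (h : mapIncidence fp fl I X p' b') :
    Sum.inl p' ∈ Sum.map fp fl '' X ∧ Sum.inr b' ∈ Sum.map fp fl '' X := by
  obtain ⟨p, b, hp, hb, -, rfl, rfl⟩ := h
  exact ⟨⟨_, hp, rfl⟩, ⟨_, hb, rfl⟩⟩

end Embedding

section AddPoint

variable {I : P → L → Prop} {D : Set (P ⊕ L)} {y z : P ⊕ L} {p q : P} {b : L} {S : Set L}

def addPoint (I : P → L → Prop) (p : P) (S : Set L) : P → L → Prop :=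
  fun q b => I q b ∨ (q = p ∧ b ∈ S)

theorem addPoint_iff_of_ne (h : q ≠ p) : addPoint I p S q b ↔ I q b := by
  simp [addPoint, h]

theorem addPoint_self_iff (hp : ∀ b, ¬ I p b) : addPoint I p S p b ↔ b ∈ S := by
  simp [addPoint, hp]

theorem adj_addPoint (h : Adj (addPoint I p S) y z) (hy : y ≠ .inl p) (hz : z ≠ .inl p) :
    Adj I y z := by
  rcases y with q | c <;> rcases z with q' | c'
  exacts [h, (addPoint_iff_of_ne (I := I) (S := S) (by rintro rfl; exact hy rfl)).1 h,
    (addPoint_iff_of_ne (I := I) (S := S) (by rintro rfl; exact hz rfl)).1 h, h]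

theorem adj_addPoint_inl (hp : ∀ b, ¬ I p b) (h : Adj (addPoint I p S) (.inl p) z) :
    z ∈ Sum.inr '' S := by
  rcases z with q | c
  exacts [h.elim, ⟨c, (addPoint_self_iff (S := S) hp).1 h, rfl⟩]

theorem hyperfree_addPoint_inl (hp : ∀ b, ¬ I p b) (hS : S.encard ≤ 1) (Z : Set (P ⊕ L)) :
    Hyperfree k (addPoint I p S) Z (.inl p) :=
  (encard_le_encard fun _ hc => (addPoint_self_iff hp).1 hc.2).trans hS

theorem IsPartial.addPoint (h : IsPartial k n I D) (hp : ∀ b, ¬ I p b) (hS : S.encard ≤ 1)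
    (hroom : ∀ b ∈ S, (pointsIn I D b).encard < n) :
    IsPartial k n (Steiner.addPoint I p S) (insert (.inl p) D) := by
  have hD : ∀ {c : L}, Sum.inr c ∈ insert (.inl p) D → Sum.inr c ∈ D := fun hc =>
    hc.resolve_left (by simp)
  refine ⟨fun T hT hTk c c' hc hc' hTc hTc' => ?_, fun c hc => ?_⟩
  · by_cases hpT : p ∈ T
    · exact encard_le_one_iff.1 hS c c' ((addPoint_self_iff hp).1 (hTc p hpT))
        ((addPoint_self_iff hp).1 (hTc' p hpT))
    have hne : ∀ q ∈ T, q ≠ p := fun q hq => by rintro rfl; exact hpT hq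
    refine h.1 T (fun q hq => (hT q hq).resolve_left (by simpa using hne q hq)) hTk c c'
      (hD hc) (hD hc') (fun q hq => ?_) (fun q hq => ?_)
    exacts [(addPoint_iff_of_ne (hne q hq)).1 (hTc q hq),
      (addPoint_iff_of_ne (hne q hq)).1 (hTc' q hq)]
  · have hsub : pointsIn (Steiner.addPoint I p S) (insert (.inl p) D) c ⊆
        insert p (pointsIn I D c) := by
      rintro q ⟨hq, hqc⟩
      by_cases hqp : q = p
      · exact .inl hqp
      · exact .inr ⟨hq.resolve_left (by simpa using hqp), (addPoint_iff_of_ne hqp).1 hqc⟩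
    by_cases hcS : c ∈ S
    · exact (encard_le_encard hsub).trans ((encard_insert_le _ _).trans
        (Order.add_one_le_of_lt (hroom c hcS)))
    · refine (encard_le_encard fun q hq => ?_).trans (h.2 c (hD hc))
      obtain rfl | hq' := hsub hq
      · exact absurd ((addPoint_self_iff hp).1 hq.2) hcS
      · exact hq'

end AddPoint

section AddBlock

variable {I : P → L → Prop} {D : Set (P ⊕ L)} {y z : P ⊕ L} {q : P} {b c : L} {T : Set P}

def addBlock (I : P → L → Prop) (b : L) (T : Set P) : P → L → Prop :=
  fun q c => I q c ∨ (q ∈ T ∧ c = b)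

theorem addBlock_iff_of_ne (h : c ≠ b) : addBlock I b T q c ↔ I q c := by
  simp [addBlock, h]

theorem addBlock_self_iff (hb : ∀ q, ¬ I q b) : addBlock I b T q b ↔ q ∈ T := by
  simp [addBlock, hb]

theorem adj_addBlock (h : Adj (addBlock I b T) y z) (hy : y ≠ .inr b) (hz : z ≠ .inr b) :
    Adj I y z := by
  rcases y with q | c <;> rcases z with q' | c'
  exacts [h, (addBlock_iff_of_ne (I := I) (T := T) (by rintro rfl; exact hz rfl)).1 h,
    (addBlock_iff_of_ne (I := I) (T := T) (by rintro rfl; exact hy rfl)).1 h, h]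

theorem adj_addBlock_inr (hb : ∀ q, ¬ I q b) (h : Adj (addBlock I b T) (.inr b) z) :
    z ∈ Sum.inl '' T := by
  rcases z with q | c
  exacts [⟨q, (addBlock_self_iff (T := T) hb).1 h, rfl⟩, h.elim]

theorem hyperfree_addBlock_inr (hb : ∀ q, ¬ I q b) (hT : T.encard ≤ k) (Z : Set (P ⊕ L)) :
    Hyperfree k (addBlock I b T) Z (.inr b) :=
  (encard_le_encard fun _ hq => (addBlock_self_iff hb).1 hq.2).trans hT

theorem IsPartial.addBlock (h : IsPartial k n I D) (hb : ∀ q, ¬ I q b) (hkn : k ≤ n)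
    (hT : T.encard ≤ k) (hnew : T.encard = k → ∀ c, Sum.inr c ∈ D → ¬ ∀ q ∈ T, I q c) :
    IsPartial k n (Steiner.addBlock I b T) (insert (.inr b) D) := by
  have hD : ∀ {c : L}, Sum.inr c ∈ insert (.inr b) D → c ≠ b → Sum.inr c ∈ D := fun hc hcb =>
    hc.resolve_left (by simpa using hcb)
  have hpts : ∀ c, c ≠ b →
      pointsIn (Steiner.addBlock I b T) (insert (.inr b) D) c = pointsIn I D c := fun c hcb => by
    ext q
    simp [pointsIn, addBlock_iff_of_ne hcb]
  refine ⟨fun S hS hSk c c' hc hc' hSc hSc' => ?_, fun c hc => ?_⟩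
  · have key : ∀ c', Sum.inr c' ∈ insert (.inr b) D → c' ≠ b →
        (∀ q ∈ S, Steiner.addBlock I b T q b) → (∀ q ∈ S, Steiner.addBlock I b T q c') → False := by
      intro c' hc' hc'b hSb hSc'
      have hST : S ⊆ T := fun q hq => (addBlock_self_iff hb).1 (hSb q hq)
      have hTk : T.encard = k := hT.antisymm (hSk ▸ encard_le_encard hST)
      have hTfin : T.Finite := finite_of_encard_le_coe hT
      obtain rfl := hTfin.eq_of_subset_of_encard_le' hST (hTk.trans hSk.symm).le
      exact hnew hTk c' (hD hc' hc'b) fun q hq => (addBlock_iff_of_ne hc'b).1 (hSc' q hq)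
    by_cases hcb : c = b <;> by_cases hc'b : c' = b
    · rw [hcb, hc'b]
    · exact (key c' hc' hc'b (hcb ▸ hSc) hSc').elim
    · exact (key c hc hcb (hc'b ▸ hSc') hSc).elim
    · refine h.1 S (fun q hq => (hS q hq).resolve_left (by simp)) hSk c c' (hD hc hcb)
        (hD hc' hc'b) (fun q hq => ?_) (fun q hq => ?_)
      exacts [(addBlock_iff_of_ne hcb).1 (hSc q hq), (addBlock_iff_of_ne hc'b).1 (hSc' q hq)]
  · by_cases hcb : c = b
    · subst hcb
      exact (encard_le_encard fun q hq => (addBlock_self_iff hb).1 hq.2).trans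
        (hT.trans (Nat.cast_le.2 hkn))
    · rw [hpts c hcb]
      exact h.2 c (hD hc hcb)

end AddBlock

section Amalgamation

variable {IB IC : P → L → Prop} {B C X : Set (P ⊕ L)}

/-- `B` sits in the left copies; an element `x` of `C \ X` that is later added as a new element
becomes its right copy `Sum.map Sum.inr Sum.inr x`, kept unused by `fresh`. -/
structure Amalgam (k n : ℕ) (IB IC : P → L → Prop) (B C X : Set (P ⊕ L)) where
  I : P ⊕ P → L ⊕ L → Prop
  D : Set ((P ⊕ P) ⊕ (L ⊕ L))
  gp : P → P ⊕ P
  gl : L → L ⊕ L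
  finite : D.Finite
  isPartial : IsPartial k n I D
  embB : IsEmbedding IB I B D Sum.inl Sum.inl
  embC : IsEmbedding IC I X D gp gl
  agree : ∀ x ∈ B ∩ C, Sum.map gp gl x = Sum.map Sum.inl Sum.inl x
  openB : OpenOver k I (Sum.map Sum.inl Sum.inl '' B) D
  openC : OpenOver k I (Sum.map gp gl '' X) D
  fresh : ∀ x ∈ C \ X, Sum.map Sum.inr Sum.inr x ∉ D
  mem_of_incid : ∀ p b, I p b → Sum.inl p ∈ D ∧ Sum.inr b ∈ D

namespace Amalgam

def init (hB : B.Finite) (hBp : IsPartial k n IB B)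
    (hagree : ∀ p b, Sum.inl p ∈ B ∩ C → Sum.inr b ∈ B ∩ C → (IB p b ↔ IC p b))
    (hAB : OpenOver k IB (B ∩ C) B) : Amalgam k n IB IC B C (B ∩ C) :=
  have e := isEmbedding_mapIncidence (I := IB) (X := B) Sum.inl_injective Sum.inl_injective
  { I := mapIncidence Sum.inl Sum.inl IB B
    D := Sum.map Sum.inl Sum.inl '' B
    gp := Sum.inl
    gl := Sum.inl
    finite := hB.image _
    isPartial := hBp.image e
    embB := e
    embC := ⟨e.mapsTo.mono_left inter_subset_left, e.injOn.mono inter_subset_left,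
      fun p b hp hb => (e.incid_iff p b hp.1 hb.1).trans (hagree p b hp hb)⟩
    agree := fun _ _ => rfl
    openB := openOver_self
    openC := hAB.image inter_subset_left e
    fresh := by rintro (p | b) - ⟨q | c, -, h⟩ <;> simp at h
    mem_of_incid := fun _ _ h => mapIncidence_mem h }

variable (s : Amalgam k n IB IC B C X) {x : P ⊕ L}

theorem fresh_of_insert : ∀ z ∈ C \ insert x X, Sum.map Sum.inr Sum.inr z ∉ s.D :=
  fun z hz => s.fresh z (sdiff_subset_sdiff_right (subset_insert x X) hz)

theorem fresh_insert :
    ∀ z ∈ C \ insert x X, Sum.map Sum.inr Sum.inr z ∉ insert (Sum.map Sum.inr Sum.inr x) s.D := by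
  intro z hz h
  rcases h with h | h
  · exact hz.2 (Sum.map_injective.2 ⟨Sum.inr_injective, Sum.inr_injective⟩ h ▸ mem_insert z X)
  · exact s.fresh_of_insert z hz h

theorem nonempty_insert_inl_of_lt (hAX : B ∩ C ⊆ X) {xp : P} (hx : Sum.inl xp ∈ C \ X)
    (hN : (blocksIn IC X xp).encard ≤ 1)
    (hroom : ∀ b ∈ blocksIn IC X xp, (pointsIn s.I s.D (s.gl b)).encard < n) :
    Nonempty (Amalgam k n IB IC B C (insert (.inl xp) X)) := by
  classical
  set y : P ⊕ P := .inr xp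
  set S := s.gl '' blocksIn IC X xp
  have hyD : .inl y ∉ s.D := s.fresh _ hx
  have hy : ∀ β, ¬ s.I y β := fun β h => hyD (s.mem_of_incid _ _ h).1
  have hS : S.encard ≤ 1 := (encard_image_le _ _).trans hN
  have hSE : Sum.inr '' S ⊆ Sum.map s.gp s.gl '' X := by
    rintro _ ⟨_, ⟨b, hb, rfl⟩, rfl⟩
    exact ⟨.inr b, hb.1, rfl⟩
  have hold : ∀ q β, Sum.inl q ∈ s.D → (addPoint s.I y S q β ↔ s.I q β) :=
    fun q β hq => addPoint_iff_of_ne (by rintro rfl; exact hyD hq)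
  have hadj : ∀ z w, Adj (addPoint s.I y S) z w → z ≠ .inl y → w ≠ .inl y → Adj s.I z w :=
    fun _ _ => adj_addPoint
  refine ⟨{
    I := addPoint s.I y S
    D := insert (.inl y) s.D
    gp := update s.gp xp y
    gl := s.gl
    finite := s.finite.insert _
    isPartial := s.isPartial.addPoint hy hS (by rintro _ ⟨b, hb, rfl⟩; exact hroom b hb)
    embB := s.embB.mono (subset_insert _ _) fun q β hq _ => hold q β hq
    embC := (s.embC.mono (subset_insert _ _) fun q β hq _ => hold q β hq).insert_inl hx.2
      (mem_insert _ _) (fun h => hyD (s.embC.mapsTo.image_subset h)) fun b hb => ?_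
    agree := fun z hz => (eqOn_map_update_inl hx.2 y (hAX hz)).trans (s.agree z hz)
    openB := s.openB.insert_right (fun h => hyD (s.embB.mapsTo.image_subset h))
      (hyperfree_addPoint_inl hy hS) hadj
    openC := by
      rw [image_map_update_insert_inl hx.2]
      exact s.openC.insert_insert (fun w hw => hSE (adj_addPoint_inl hy hw)) hadj
    fresh := s.fresh_insert
    mem_of_incid := ?_ }⟩
  · rw [addPoint_self_iff hy, s.embC.injOn_inr.mem_image_iff (fun _ hb => hb.1) hb]
    exact ⟨And.right, fun h => ⟨hb, h⟩⟩
  · rintro q β (h | ⟨rfl, hβ⟩)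
    · exact (s.mem_of_incid _ _ h).imp (mem_insert_of_mem _) (mem_insert_of_mem _)
    · exact ⟨mem_insert _ _, mem_insert_of_mem _ (s.embC.mapsTo.image_subset (hSE ⟨β, hβ, rfl⟩))⟩

theorem exists_point_notMem_image (hC : IsPartial k n IC C) (hXC : X ⊆ C) {xp : P}
    (hx : Sum.inl xp ∈ C \ X) {c : L} (hc : c ∈ blocksIn IC X xp)
    (hfull : n ≤ (pointsIn s.I s.D (s.gl c)).encard) :
    ∃ p, Sum.inl p ∈ s.D ∧ s.I p (s.gl c) ∧ Sum.inl p ∉ Sum.map s.gp s.gl '' X := by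
  have himage : pointsIn s.I (Sum.map s.gp s.gl '' X) (s.gl c) ⊆ s.gp '' pointsIn IC X c := by
    rintro _ ⟨⟨q | b, hq, h⟩, hqc⟩ <;> simp only [Sum.map_inl, Sum.map_inr, Sum.inl.injEq,
      reduceCtorEq] at h
    subst h
    exact ⟨q, ⟨hq, (s.embC.incid_iff q c hq hc.1).1 hqc⟩, rfl⟩
  have hCc : insert xp (pointsIn IC X c) ⊆ pointsIn IC C c :=
    insert_subset ⟨hx.1, hc.2⟩ fun q hq => ⟨hXC hq.1, hq.2⟩
  have hlt : (pointsIn IC X c).encard < n := by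
    refine lt_of_lt_of_le ?_ ((encard_le_encard hCc).trans (hC.2 c (hXC hc.1)))
    exact (finite_of_encard_le_coe ((encard_le_encard (subset_insert _ _ |>.trans hCc)).trans
      (hC.2 c (hXC hc.1)))).encard_lt_encard (ssubset_insert fun h => hx.2 h.1)
  obtain ⟨p, hp, hpE⟩ := not_subset.1 fun h : pointsIn s.I s.D (s.gl c) ⊆ _ =>
    (hfull.trans (encard_le_encard h)).not_gt ((encard_le_encard himage).trans_lt
      ((encard_image_le _ _).trans_lt hlt))
  exact ⟨p, hp.1, hp.2, fun h => hpE ⟨h, hp.2⟩⟩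

theorem nonempty_insert_inl_of_le (hC : IsPartial k n IC C) (hXC : X ⊆ C) (hAX : B ∩ C ⊆ X)
    {xp : P} (hx : Sum.inl xp ∈ C \ X) (hN : (blocksIn IC X xp).encard ≤ 1) {c : L}
    (hc : c ∈ blocksIn IC X xp) (hfull : n ≤ (pointsIn s.I s.D (s.gl c)).encard) :
    Nonempty (Amalgam k n IB IC B C (insert (.inl xp) X)) := by
  classical
  obtain ⟨p, hpD, hpc, hpE⟩ := s.exists_point_notMem_image hC hXC hx hc hfull
  have hcE : Sum.inr (s.gl c) ∈ Sum.map s.gp s.gl '' X := ⟨.inr c, hc.1, rfl⟩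
  refine ⟨{ s with
    gp := update s.gp xp p
    embC := s.embC.insert_inl hx.2 hpD hpE fun b hb => ⟨fun hpb => ?_, fun hb' => ?_⟩
    agree := fun z hz => (eqOn_map_update_inl hx.2 p (hAX hz)).trans (s.agree z hz)
    openC := by
      rw [image_map_update_insert_inl hx.2]
      exact s.openC.insert_of_saturated hpD hpE
        (one_le_encard_iff_nonempty.2 ⟨_, hcE, hpc⟩)
    fresh := s.fresh_of_insert }⟩
  · -- `p` is hyperfree over the image of `X`, so `s.gl c` is its only block there
    have hbc : s.gl b = s.gl c := encard_le_one_iff.1 (s.openC.hyperfree_insert hpD hpE) _ _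
      ⟨.inr ⟨.inr b, hb, rfl⟩, hpb⟩ ⟨.inr hcE, hpc⟩
    exact s.embC.injOn_inr hb hc.1 hbc ▸ hc.2
  · exact encard_le_one_iff.1 hN c b hc ⟨hb, hb'⟩ ▸ hpc

theorem nonempty_insert_inr_of_exists (hC : IsPartial k n IC C) (hXC : X ⊆ C)
    (hAX : B ∩ C ⊆ X) {xb : L} (hx : Sum.inr xb ∈ C \ X) (hk : (pointsIn IC X xb).encard = k)
    {β : L ⊕ L} (hβD : Sum.inr β ∈ s.D) (hβ : ∀ q ∈ pointsIn IC X xb, s.I (s.gp q) β) :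
    Nonempty (Amalgam k n IB IC B C (insert (.inr xb) X)) := by
  classical
  set T := s.gp '' pointsIn IC X xb
  have hTinj : InjOn s.gp (pointsIn IC X xb) := s.embC.injOn_inl.mono fun _ hq => hq.1
  have hTk : T.encard = k := hTinj.encard_image.trans hk
  have hβE : Sum.inr β ∉ Sum.map s.gp s.gl '' X := by
    rintro ⟨_ | c, hc, h⟩
    · simp at h
    obtain rfl : s.gl c = β := Sum.inr.inj h
    -- `c` and `xb` share the `k` points of `xb` in `X`
    refine hx.2 (hC.1 _ (fun q hq => hXC hq.1) hk c xb (hXC hc) hx.1 (fun q hq => ?_)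
      (fun q hq => hq.2) ▸ hc)
    exact (s.embC.incid_iff q c hq.1 hc).1 (hβ q hq)
  have hTβ : T ⊆ pointsIn s.I (insert (.inr β) (Sum.map s.gp s.gl '' X)) β := by
    rintro _ ⟨q, hq, rfl⟩
    exact ⟨.inr ⟨.inl q, hq.1, rfl⟩, hβ q hq⟩
  refine ⟨{ s with
    gl := update s.gl xb β
    embC := s.embC.insert_inr hx.2 hβD hβE fun q hq => ⟨fun hqβ => ?_, fun h => hβ q ⟨hq, h⟩⟩
    agree := fun z hz => (eqOn_map_update_inr hx.2 β (hAX hz)).trans (s.agree z hz)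
    openC := by
      rw [image_map_update_insert_inr hx.2]
      refine s.openC.insert_of_saturated hβD hβE (hTk.symm.trans_le ?_)
      rw [← Sum.inl_injective.encard_image]
      exact encard_le_encard fun _ ⟨t, ht, h⟩ => h ▸ ⟨(hTβ ht).1.resolve_left (by simp), (hTβ ht).2⟩
    fresh := s.fresh_of_insert }⟩
  -- `β` is hyperfree over the image of `X`, so its points there are exactly the `k` points of `T`
  have hTeq : T = pointsIn s.I (insert (.inr β) (Sum.map s.gp s.gl '' X)) β :=
    (finite_of_encard_le_coe hTk.le).eq_of_subset_of_encard_le hTβ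
      ((s.openC.hyperfree_insert hβD hβE).trans hTk.symm.le)
  have hqT : s.gp q ∈ T := by
    rw [hTeq]
    exact ⟨.inr ⟨.inl q, hq, rfl⟩, hqβ⟩
  obtain ⟨q', hq', h⟩ := hqT
  exact s.embC.injOn_inl hq'.1 hq h ▸ hq'.2

theorem nonempty_insert_inr_of_not_exists (hkn : k ≤ n) (hAX : B ∩ C ⊆ X) {xb : L}
    (hx : Sum.inr xb ∈ C \ X) (hT : (pointsIn IC X xb).encard ≤ k)
    (hnew : (pointsIn IC X xb).encard = k → ∀ β, Sum.inr β ∈ s.D →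
      ¬ ∀ q ∈ pointsIn IC X xb, s.I (s.gp q) β) :
    Nonempty (Amalgam k n IB IC B C (insert (.inr xb) X)) := by
  classical
  set y : L ⊕ L := .inr xb
  set T := s.gp '' pointsIn IC X xb
  have hyD : .inr y ∉ s.D := s.fresh _ hx
  have hy : ∀ q, ¬ s.I q y := fun q h => hyD (s.mem_of_incid _ _ h).2
  have hTinj : InjOn s.gp (pointsIn IC X xb) := s.embC.injOn_inl.mono fun _ hq => hq.1
  have hTE : Sum.inl '' T ⊆ Sum.map s.gp s.gl '' X := by
    rintro _ ⟨_, ⟨q, hq, rfl⟩, rfl⟩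
    exact ⟨.inl q, hq.1, rfl⟩
  have hold : ∀ q β, Sum.inr β ∈ s.D → (addBlock s.I y T q β ↔ s.I q β) :=
    fun q β hβ => addBlock_iff_of_ne (by rintro rfl; exact hyD hβ)
  have hadj : ∀ z w, Adj (addBlock s.I y T) z w → z ≠ .inr y → w ≠ .inr y → Adj s.I z w :=
    fun _ _ => adj_addBlock
  refine ⟨{
    I := addBlock s.I y T
    D := insert (.inr y) s.D
    gp := s.gp
    gl := update s.gl xb y
    finite := s.finite.insert _
    isPartial := s.isPartial.addBlock hy hkn (hTinj.encard_image ▸ hT)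
      fun hk β hβ hall => hnew (hTinj.encard_image ▸ hk) β hβ fun q hq => hall _ ⟨q, hq, rfl⟩
    embB := s.embB.mono (subset_insert _ _) fun q β _ hβ => hold q β hβ
    embC := (s.embC.mono (subset_insert _ _) fun q β _ hβ => hold q β hβ).insert_inr hx.2
      (mem_insert _ _) (fun h => hyD (s.embC.mapsTo.image_subset h)) fun q hq => ?_
    agree := fun z hz => (eqOn_map_update_inr hx.2 y (hAX hz)).trans (s.agree z hz)
    openB := s.openB.insert_right (fun h => hyD (s.embB.mapsTo.image_subset h))
      (hyperfree_addBlock_inr hy (hTinj.encard_image ▸ hT)) hadj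
    openC := by
      rw [image_map_update_insert_inr hx.2]
      exact s.openC.insert_insert (fun w hw => hTE (adj_addBlock_inr hy hw)) hadj
    fresh := s.fresh_insert
    mem_of_incid := ?_ }⟩
  · rw [addBlock_self_iff hy, s.embC.injOn_inl.mem_image_iff (fun _ hq => hq.1) hq]
    exact ⟨And.right, fun h => ⟨hq, h⟩⟩
  · rintro q β (h | ⟨hq, rfl⟩)
    · exact (s.mem_of_incid _ _ h).imp (mem_insert_of_mem _) (mem_insert_of_mem _)
    · exact ⟨mem_insert_of_mem _ (s.embC.mapsTo.image_subset (hTE ⟨q, hq, rfl⟩)), mem_insert _ _⟩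

theorem nonempty_insert (s : Amalgam k n IB IC B C X) (hkn : k ≤ n) (hC : IsPartial k n IC C)
    (hAX : B ∩ C ⊆ X) (hXC : X ⊆ C)
    (hx : x ∈ C \ X) (hfree : Hyperfree k IC (insert x X) x) :
    Nonempty (Amalgam k n IB IC B C (insert x X)) := by
  rcases x with xp | xb
  · have hN : (blocksIn IC X xp).encard ≤ 1 := by
      rw [← blocksIn_insert_inl]
      exact hfree
    by_cases hfull : ∃ c ∈ blocksIn IC X xp, n ≤ (pointsIn s.I s.D (s.gl c)).encard
    · obtain ⟨c, hc, hcn⟩ := hfull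
      exact s.nonempty_insert_inl_of_le hC hXC hAX hx hN hc hcn
    · push Not at hfull
      exact s.nonempty_insert_inl_of_lt hAX hx hN hfull
  · have hT : (pointsIn IC X xb).encard ≤ k := by
      rw [← pointsIn_insert_inr]
      exact hfree
    by_cases hid : (pointsIn IC X xb).encard = k ∧
        ∃ β, Sum.inr β ∈ s.D ∧ ∀ q ∈ pointsIn IC X xb, s.I (s.gp q) β
    · obtain ⟨hk, β, hβD, hβ⟩ := hid
      exact s.nonempty_insert_inr_of_exists hC hXC hAX hx hk hβD hβ
    · exact s.nonempty_insert_inr_of_not_exists hkn hAX hx hT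
        fun hk β hβD hβ => hid ⟨hk, β, hβD, hβ⟩

end Amalgam

end Amalgamation

end Steiner

theorem stmt7_general {P L : Type} (k n : ℕ) (hkn : k < n)
    (IB IC : P → L → Prop) (B C : Set (P ⊕ L))
    (hBfin : B.Finite) (hCfin : C.Finite)
    (hBpartial : IsPartial k n IB B) (hCpartial : IsPartial k n IC C)
    (hBopen : IsOpen k IB B)
    -- the intersection A = B ∩ C is a common substructure:
    (hagree : ∀ (p : P) (b : L), Sum.inl p ∈ B ∩ C → Sum.inr b ∈ B ∩ C → (IB p b ↔ IC p b))
    (hAB : OpenOver k IB (B ∩ C) B) (hAC : OpenOver k IC (B ∩ C) C) :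
    ∃ (P' L' : Type) (ID : P' → L' → Prop) (D : Set (P' ⊕ L'))
      (fp gp : P → P') (fl gl : L → L'),
      D.Finite ∧ IsPartial k n ID D ∧ IsOpen k ID D ∧
      Set.MapsTo (Sum.map fp fl) B D ∧ Set.MapsTo (Sum.map gp gl) C D ∧
      Set.InjOn (Sum.map fp fl) B ∧ Set.InjOn (Sum.map gp gl) C ∧
      (∀ (p : P) (b : L), Sum.inl p ∈ B → Sum.inr b ∈ B → (ID (fp p) (fl b) ↔ IB p b)) ∧
      (∀ (p : P) (b : L), Sum.inl p ∈ C → Sum.inr b ∈ C → (ID (gp p) (gl b) ↔ IC p b)) ∧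
      (∀ x ∈ B ∩ C, Sum.map fp fl x = Sum.map gp gl x) ∧
      OpenOver k ID (Sum.map fp fl '' B) D ∧
      OpenOver k ID (Sum.map gp gl '' C) D := by
  obtain ⟨s⟩ : Nonempty (Amalgam k n IB IC B C C) :=
    hAC.induction_on (motive := fun X => Nonempty (Amalgam k n IB IC B C X))
      (hCfin.subset sdiff_subset) ⟨.init hBfin hBpartial hagree hAB⟩
      (fun _ _ hAX hXC hx hfree ⟨s⟩ => s.nonempty_insert hkn.le hCpartial hAX hXC hx hfree)
      inter_subset_right subset_rfl
  exact ⟨P ⊕ P, L ⊕ L, s.I, s.D, Sum.inl, s.gp, Sum.inl, s.gl, s.finite, s.isPartial,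
    (hBopen.image s.embB).of_openOver s.openB, s.embB.mapsTo, s.embC.mapsTo, s.embB.injOn,
    s.embC.injOn, s.embB.incid_iff, s.embC.incid_iff, fun x hx => (s.agree x hx).symm,
    s.openB, s.openC⟩

theorem stmt7 {P L : Type} (k n : ℕ) (hk : 2 ≤ k) (hkn : k < n)
    (IB IC : P → L → Prop) (B C : Set (P ⊕ L))
    (hBfin : B.Finite) (hCfin : C.Finite)
    (hBpartial : IsPartial k n IB B) (hCpartial : IsPartial k n IC C)
    (hBopen : IsOpen k IB B) (hCopen : IsOpen k IC C)
    -- the intersection A = B ∩ C is a common substructure: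
    (hagree : ∀ (p : P) (b : L), Sum.inl p ∈ B ∩ C → Sum.inr b ∈ B ∩ C → (IB p b ↔ IC p b))
    (hAB : OpenOver k IB (B ∩ C) B) (hAC : OpenOver k IC (B ∩ C) C) :
    ∃ (P' L' : Type) (ID : P' → L' → Prop) (D : Set (P' ⊕ L'))
      (fp gp : P → P') (fl gl : L → L'),
      D.Finite ∧ IsPartial k n ID D ∧ IsOpen k ID D ∧
      Set.MapsTo (Sum.map fp fl) B D ∧ Set.MapsTo (Sum.map gp gl) C D ∧
      Set.InjOn (Sum.map fp fl) B ∧ Set.InjOn (Sum.map gp gl) C ∧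
      (∀ (p : P) (b : L), Sum.inl p ∈ B → Sum.inr b ∈ B → (ID (fp p) (fl b) ↔ IB p b)) ∧
      (∀ (p : P) (b : L), Sum.inl p ∈ C → Sum.inr b ∈ C → (ID (gp p) (gl b) ↔ IC p b)) ∧
      (∀ x ∈ B ∩ C, Sum.map fp fl x = Sum.map gp gl x) ∧
      OpenOver k ID (Sum.map fp fl '' B) D ∧
      OpenOver k ID (Sum.map gp gl '' C) D :=
  stmt7_general k n hkn IB IC B C hBfin hCfin hBpartial hCpartial hBopen hagree hAB hAC
end

section
/- Fix integers k, n with 2 ≤ k < n. Let A ⊆ B be finite open partial (k,n)-Steiner systems such that B is not open over A, i.e. there is a nonempty subset C₀ ⊆ B ∖ A such that no element of C₀ is hyperfree in A ∪ C₀. Then no finite open partial (k,n)-Steiner system C containing A contains n+1 subsets B₀, …, Bₙ such that B_i ∩ B_j = A for all i ≠ j and each B_i is isomorphic to B via an isomorphism fixing A pointwise. That is, every finite open partial (k,n)-Steiner system contains at most n copies of B over A that pairwise intersect exactly in A. -/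
open Steiner

theorem stmt8 {P L : Type} (k n : ℕ) (hk : 2 ≤ k) (hkn : k < n)
    (IB IC : P → L → Prop)
    (A B : Set (P ⊕ L)) (hAB : A ⊆ B) (hBfin : B.Finite)
    (hBpartial : IsPartial k n IB B) (hBopen : IsOpen k IB B)
    -- B is not open over A, witnessed by C₀:
    (C0 : Set (P ⊕ L)) (hC0 : C0 ⊆ B \ A) (hC0ne : C0.Nonempty)
    (hclosed : ∀ c ∈ C0, ¬ Hyperfree k IB (A ∪ C0) c)
    -- C is a finite open partial (k,n)-Steiner system containing A:
    (C : Set (P ⊕ L)) (hCfin : C.Finite) (hAC : A ⊆ C)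
    (hCpartial : IsPartial k n IC C) (hCopen : IsOpen k IC C)
    -- containing n+1 copies of B over A pairwise intersecting in A:
    (Bi : Fin (n + 1) → Set (P ⊕ L)) (hBiC : ∀ i, Bi i ⊆ C)
    (hinter : ∀ i j, i ≠ j → Bi i ∩ Bi j = A)
    (hiso : ∀ i, ∃ (fp : P → P) (fl : L → L),
        Set.BijOn (Sum.map fp fl) B (Bi i) ∧
        (∀ x ∈ A, Sum.map fp fl x = x) ∧
        (∀ (p : P) (b : L), Sum.inl p ∈ B → Sum.inr b ∈ B →
          (IC (fp p) (fl b) ↔ IB p b))) :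
    False := by
  classical
  choose fp fl hbij hfix hinc using hiso
  set F : Fin (n+1) → (P ⊕ L) → (P ⊕ L) := fun i => Sum.map (fp i) (fl i) with hF
  have hC0B : C0 ⊆ B := fun x hx => (hC0 hx).1
  have hinj : ∀ i, Set.InjOn (F i) B := fun i => (hbij i).injOn
  have hnotA : ∀ i, ∀ x ∈ C0, F i x ∉ A := by
    intro i x hx hFA
    have h1 : F i (F i x) = F i x := hfix i _ hFA
    have h2 : F i x = x := hinj i (hAB hFA) (hC0B hx) h1
    exact (hC0 hx).2 (h2 ▸ hFA)
  have hdist : ∀ i j : Fin (n+1), i ≠ j → ∀ x ∈ C0, F i x ≠ F j x := by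
    intro i j hij x hx heq
    have h1 : F i x ∈ Bi i := (hbij i).mapsTo (hC0B hx)
    have h2 : F i x ∈ Bi j := heq ▸ (hbij j).mapsTo (hC0B hx)
    exact hnotA i x hx (by rw [← hinter i j hij]; exact ⟨h1, h2⟩)
  have hfixp : ∀ (i) (p : P), Sum.inl p ∈ A → fp i p = p := by
    intro i p hp
    have := hfix i _ hp
    simpa [hF] using this
  have hfixl : ∀ (i) (b : L), Sum.inr b ∈ A → fl i b = b := by
    intro i b hb
    have := hfix i _ hb
    simpa [hF] using this
  have hFl : ∀ (i) (b : L), F i (Sum.inr b) = Sum.inr (fl i b) := by intro i b; simp [hF]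
  have hFp : ∀ (i) (p : P), F i (Sum.inl p) = Sum.inl (fp i p) := by intro i p; simp [hF]
  -- no point of C0 is incident (in B) with a block of A
  have hnoA : ∀ (p : P) (b : L), Sum.inl p ∈ C0 → Sum.inr b ∈ A → ¬ IB p b := by
    intro p b hp hb hI
    have hginj : Function.Injective (fun i : Fin (n+1) => fp i p) := by
      intro i j h
      by_contra hij
      apply hdist i j hij _ hp
      have h' : fp i p = fp j p := h
      rw [hFp, hFp, h']
    have hsub : Set.range (fun i : Fin (n+1) => fp i p) ⊆ pointsIn IC C b := by
      rintro _ ⟨i, rfl⟩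
      refine ⟨hBiC i ?_, ?_⟩
      · have h1 : F i (Sum.inl p) ∈ Bi i := (hbij i).mapsTo (hC0B hp)
        rwa [hFp] at h1
      · have h1 := hinc i p b (hC0B hp) (hAB hb)
        rw [hfixl i b hb] at h1
        exact h1.mpr hI
    have h1 : ((n+1 : ℕ) : ℕ∞) ≤ (pointsIn IC C b).encard := by
      calc ((n+1 : ℕ) : ℕ∞) = (Set.range fun i : Fin (n+1) => fp i p).encard := by
            rw [← Set.image_univ, Set.InjOn.encard_image (hginj.injOn)]
            simp [Set.encard_univ]
        _ ≤ _ := Set.encard_mono hsub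
    have h2 := h1.trans (hCpartial.2 b (hAC hb))
    have h3 : (n+1 : ℕ) ≤ n := by exact_mod_cast h2
    omega
  -- the set Y
  set Ap : Set (P ⊕ L) := {x | x ∈ A ∧ ∃ (p : P) (b : L), x = Sum.inl p ∧ Sum.inr b ∈ C0 ∧ IB p b}
    with hAp
  set Y : Set (P ⊕ L) := Ap ∪ ⋃ i, F i '' C0 with hY
  have hYC : Y ⊆ C := by
    apply Set.union_subset (fun x hx => hAC hx.1)
    apply Set.iUnion_subset
    intro i x hx
    obtain ⟨y, hy, rfl⟩ := hx
    exact hBiC i ((hbij i).mapsTo (hC0B hy))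
  have hYfin : Y.Finite := by
    apply Set.Finite.union
    · exact (hBfin.subset hAB).subset (fun x hx => hx.1)
    · exact Set.finite_iUnion (fun i => (hBfin.subset hC0B).image _)
  have hYne : Y.Nonempty := by
    obtain ⟨x, hx⟩ := hC0ne
    exact ⟨F 0 x, Or.inr (Set.mem_iUnion.mpr ⟨0, ⟨x, hx, rfl⟩⟩)⟩
  have hmemY : ∀ (i) (x), x ∈ C0 → F i x ∈ Y := by
    intro i x hx
    exact Or.inr (Set.mem_iUnion.mpr ⟨i, ⟨x, hx, rfl⟩⟩)
  have hn1 : (1 : Fin (n+1)).val = 1 := by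
    have : 1 < n + 1 := by omega
    simp [Fin.val_one, Nat.mod_eq_of_lt this]
  have h01 : (0 : Fin (n+1)) ≠ 1 := by
    intro h
    have := congrArg Fin.val h
    rw [hn1] at this
    simp at this
  obtain ⟨c, hcY, hcfree⟩ := hCopen Y hYC hYfin hYne
  rcases hcY with hcA | hcU
  · -- c is a point of A incident with a block of C0
    obtain ⟨hcA', p, b, rfl, hbC0, hIpb⟩ := hcA
    have hblocks : ∀ i : Fin (n+1), fl i b ∈ blocksIn IC Y p := by
      intro i
      refine ⟨?_, ?_⟩
      · rw [← hFl]; exact hmemY i _ hbC0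
      · have h1 := hinc i p b (hAB hcA') (hC0B hbC0)
        rw [hfixp i p hcA'] at h1
        exact h1.mpr hIpb
    have hne : fl 0 b ≠ fl 1 b := by
      intro h
      apply hdist 0 1 h01 _ hbC0
      rw [hFl, hFl, h]
    have h1 : 1 < (blocksIn IC Y p).encard :=
      Set.one_lt_encard_iff.mpr ⟨_, _, hblocks 0, hblocks 1, hne⟩
    exact absurd (hcfree : (blocksIn IC Y p).encard ≤ 1) (not_le.mpr h1)
  · obtain ⟨S, ⟨i, rfl⟩, hcS⟩ := hcU
    obtain ⟨x, hxC0, rfl⟩ := hcS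
    rcases x with p | b
    · -- point case
      have hnh := hclosed _ hxC0
      have h1 : 1 < (blocksIn IB (A ∪ C0) p).encard :=
        not_le.mp (fun h => hnh h)
      obtain ⟨b₁, b₂, hb₁, hb₂, hbne⟩ := Set.one_lt_encard_iff.mp h1
      have hbC0 : ∀ b' : L, b' ∈ blocksIn IB (A ∪ C0) p → Sum.inr b' ∈ C0 := by
        intro b' hb'
        rcases hb'.1 with h | h
        · exact absurd hb'.2 (hnoA p b' hxC0 h)
        · exact h
      have hmem : ∀ b' : L, b' ∈ blocksIn IB (A ∪ C0) p →
          fl i b' ∈ blocksIn IC Y (fp i p) := by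
        intro b' hb'
        refine ⟨?_, ?_⟩
        · rw [← hFl]; exact hmemY i _ (hbC0 b' hb')
        · exact (hinc i p b' (hC0B hxC0) (hC0B (hbC0 b' hb'))).mpr hb'.2
      have hne : fl i b₁ ≠ fl i b₂ := by
        intro h
        apply hbne
        have := hinj i (hC0B (hbC0 b₁ hb₁)) (hC0B (hbC0 b₂ hb₂)) (by rw [hFl, hFl, h])
        exact Sum.inr.inj this
      have h2 : 1 < (blocksIn IC Y (fp i p)).encard :=
        Set.one_lt_encard_iff.mpr ⟨_, _, hmem b₁ hb₁, hmem b₂ hb₂, hne⟩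
      rw [hFp] at hcfree
      exact absurd (hcfree : (blocksIn IC Y (fp i p)).encard ≤ 1) (not_le.mpr h2)
    · -- block case
      have hnh := hclosed _ hxC0
      have h1 : (k : ℕ∞) < (pointsIn IB (A ∪ C0) b).encard :=
        not_le.mp (fun h => hnh h)
      have hSB : ∀ q ∈ pointsIn IB (A ∪ C0) b, Sum.inl q ∈ B := by
        intro q hq
        rcases hq.1 with h | h
        · exact hAB h
        · exact hC0B h
      have hsub : fp i '' (pointsIn IB (A ∪ C0) b) ⊆ pointsIn IC Y (fl i b) := by
        rintro _ ⟨q, hq, rfl⟩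
        refine ⟨?_, (hinc i q b (hSB q hq) (hC0B hxC0)).mpr hq.2⟩
        rcases hq.1 with h | h
        · rw [hfixp i q h]
          exact Or.inl ⟨h, q, b, rfl, hxC0, hq.2⟩
        · rw [← hFp]; exact hmemY i _ h
      have hinjS : Set.InjOn (fp i) (pointsIn IB (A ∪ C0) b) := by
        intro q₁ hq₁ q₂ hq₂ h
        have := hinj i (hSB q₁ hq₁) (hSB q₂ hq₂) (by rw [hFp, hFp, h])
        exact Sum.inl.inj this
      have h2 : (k : ℕ∞) < (pointsIn IC Y (fl i b)).encard := by
        calc (k : ℕ∞) < (pointsIn IB (A ∪ C0) b).encard := h1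
          _ = (fp i '' (pointsIn IB (A ∪ C0) b)).encard := (hinjS.encard_image).symm
          _ ≤ _ := Set.encard_mono hsub
      rw [hFl] at hcfree
      exact absurd (hcfree : (pointsIn IC Y (fl i b)).encard ≤ k) (not_le.mpr h2)
end

section
/- Fix integers k, n with 2 ≤ k < n. Then: (i) if A ⊆ B are finite open partial (k,n)-Steiner systems with A ≤_o B, then δ(A ∩ B₀) ≤ δ(B₀) for every subset B₀ ⊆ B (in particular δ(A) ≤ δ(B)); (ii) if A ≤_o A ∪ {c} is a one-element strong extension of finite open partial (k,n)-Steiner systems, then δ(A ∪ {c}) = δ(A) if and only if c is a point incident with exactly one block of A or a block incident with exactly k points of A, and otherwise δ(A ∪ {c}) > δ(A); (iii) if A ⊆ B are finite partial (k,n)-Steiner systems such that δ(A ∩ B₀) ≤ δ(B₀) for every subset B₀ ⊆ B, then for every subset C ⊆ B and every subset C₀ ⊆ C one has δ(A ∩ C₀) ≤ δ(C₀). -/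
open Steiner

/-- The predimension δ(X) = |points of X| + k·|blocks of X| − |incidences within X|. -/
noncomputable def delta {P L : Type} (k : ℕ) (I : P → L → Prop) (X : Set (P ⊕ L)) : ℤ :=
  (({p : P | Sum.inl p ∈ X}).ncard : ℤ) + (k : ℤ) * (({b : L | Sum.inr b ∈ X}).ncard : ℤ)
    - (({pb : P × L | Sum.inl pb.1 ∈ X ∧ Sum.inr pb.2 ∈ X ∧ I pb.1 pb.2}).ncard : ℤ)

namespace SteinerAux

open Set

variable {P L : Type} {k : ℕ} {I : P → L → Prop}

lemma pts_finite {X : Set (P ⊕ L)} (hX : X.Finite) : {p : P | Sum.inl p ∈ X}.Finite :=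
  hX.preimage (Sum.inl_injective.injOn)

lemma blks_finite {X : Set (P ⊕ L)} (hX : X.Finite) : {b : L | Sum.inr b ∈ X}.Finite :=
  hX.preimage (Sum.inr_injective.injOn)

lemma inc_finite {X : Set (P ⊕ L)} (hX : X.Finite) :
    {pb : P × L | Sum.inl pb.1 ∈ X ∧ Sum.inr pb.2 ∈ X ∧ I pb.1 pb.2}.Finite :=
  ((pts_finite hX).prod (blks_finite hX)).subset (fun pb hpb => ⟨hpb.1, hpb.2.1⟩)

lemma blocksIn_finite {X : Set (P ⊕ L)} (hX : X.Finite) (p : P) : (blocksIn I X p).Finite :=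
  (blks_finite hX).subset (fun _ hb => hb.1)

lemma pointsIn_finite {X : Set (P ⊕ L)} (hX : X.Finite) (b : L) : (pointsIn I X b).Finite :=
  (pts_finite hX).subset (fun _ hp => hp.1)

lemma delta_insert_inl {X : Set (P ⊕ L)} (hX : X.Finite) {p : P} (hp : Sum.inl p ∉ X) :
    delta k I (X ∪ {Sum.inl p}) = delta k I X + 1 - ((blocksIn I X p).ncard : ℤ) := by
  have hpts : {q : P | Sum.inl q ∈ X ∪ {Sum.inl p}} = insert p {q : P | Sum.inl q ∈ X} := by
    ext q
    simp [Set.mem_insert_iff, or_comm]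
  have hblks : {b : L | Sum.inr b ∈ X ∪ {Sum.inl p}} = {b : L | Sum.inr b ∈ X} := by
    ext b; simp
  have hinc : {pb : P × L | Sum.inl pb.1 ∈ X ∪ {Sum.inl p} ∧ Sum.inr pb.2 ∈ X ∪ {Sum.inl p}
        ∧ I pb.1 pb.2}
      = {pb : P × L | Sum.inl pb.1 ∈ X ∧ Sum.inr pb.2 ∈ X ∧ I pb.1 pb.2}
        ∪ (Prod.mk p '' blocksIn I X p) := by
    ext ⟨q, b⟩
    simp only [Set.mem_union, Set.mem_setOf_eq, Set.mem_image, Set.mem_singleton_iff,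
      Sum.inl.injEq, blocksIn, Prod.mk.injEq, reduceCtorEq, or_false]
    constructor
    · rintro ⟨hq | rfl, hb, hI⟩
      · exact Or.inl ⟨hq, hb, hI⟩
      · exact Or.inr ⟨b, ⟨hb, hI⟩, rfl, rfl⟩
    · rintro (⟨hq, hb, hI⟩ | ⟨b', ⟨hb, hI⟩, rfl, rfl⟩)
      · exact ⟨Or.inl hq, hb, hI⟩
      · exact ⟨Or.inr rfl, hb, hI⟩
  have hpmem : p ∉ {q : P | Sum.inl q ∈ X} := hp
  have hdisj : Disjoint {pb : P × L | Sum.inl pb.1 ∈ X ∧ Sum.inr pb.2 ∈ X ∧ I pb.1 pb.2}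
      (Prod.mk p '' blocksIn I X p) := by
    rw [Set.disjoint_left]
    rintro ⟨q, b⟩ hqb ⟨b', _, h⟩
    obtain ⟨rfl, rfl⟩ := Prod.mk.injEq .. ▸ h
    exact hp hqb.1
  have hcard1 : {q : P | Sum.inl q ∈ X ∪ {Sum.inl p}}.ncard = {q : P | Sum.inl q ∈ X}.ncard + 1 := by
    rw [hpts, Set.ncard_insert_of_notMem hpmem (pts_finite hX)]
  have hcard2 : {pb : P × L | Sum.inl pb.1 ∈ X ∪ {Sum.inl p} ∧ Sum.inr pb.2 ∈ X ∪ {Sum.inl p}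
        ∧ I pb.1 pb.2}.ncard
      = {pb : P × L | Sum.inl pb.1 ∈ X ∧ Sum.inr pb.2 ∈ X ∧ I pb.1 pb.2}.ncard
        + (blocksIn I X p).ncard := by
    rw [hinc, Set.ncard_union_eq hdisj (inc_finite hX) ((blocksIn_finite hX p).image _),
      Set.ncard_image_of_injective _ (fun a b h => congrArg Prod.snd h)]
  unfold delta
  rw [hblks, hcard1, hcard2]
  push_cast
  ring

lemma delta_insert_inr {X : Set (P ⊕ L)} (hX : X.Finite) {b : L} (hb : Sum.inr b ∉ X) :
    delta k I (X ∪ {Sum.inr b}) = delta k I X + k - ((pointsIn I X b).ncard : ℤ) := by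
  have hpts : {q : P | Sum.inl q ∈ X ∪ {Sum.inr b}} = {q : P | Sum.inl q ∈ X} := by
    ext q; simp
  have hblks : {b' : L | Sum.inr b' ∈ X ∪ {Sum.inr b}} = insert b {b' : L | Sum.inr b' ∈ X} := by
    ext b'
    simp [Set.mem_insert_iff, or_comm]
  have hinc : {pb : P × L | Sum.inl pb.1 ∈ X ∪ {Sum.inr b} ∧ Sum.inr pb.2 ∈ X ∪ {Sum.inr b}
        ∧ I pb.1 pb.2}
      = {pb : P × L | Sum.inl pb.1 ∈ X ∧ Sum.inr pb.2 ∈ X ∧ I pb.1 pb.2}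
        ∪ ((fun q => (q, b)) '' pointsIn I X b) := by
    ext ⟨q, b'⟩
    simp only [Set.mem_union, Set.mem_setOf_eq, Set.mem_image, Set.mem_singleton_iff,
      Sum.inr.injEq, pointsIn, Prod.mk.injEq, reduceCtorEq, or_false]
    constructor
    · rintro ⟨hq, hb' | rfl, hI⟩
      · exact Or.inl ⟨hq, hb', hI⟩
      · exact Or.inr ⟨q, ⟨hq, hI⟩, rfl, rfl⟩
    · rintro (⟨hq, hb', hI⟩ | ⟨q', ⟨hq, hI⟩, rfl, rfl⟩)
      · exact ⟨hq, Or.inl hb', hI⟩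
      · exact ⟨hq, Or.inr rfl, hI⟩
  have hbmem : b ∉ {b' : L | Sum.inr b' ∈ X} := hb
  have hdisj : Disjoint {pb : P × L | Sum.inl pb.1 ∈ X ∧ Sum.inr pb.2 ∈ X ∧ I pb.1 pb.2}
      ((fun q => (q, b)) '' pointsIn I X b) := by
    rw [Set.disjoint_left]
    rintro ⟨q, b'⟩ hqb ⟨q', _, h⟩
    obtain ⟨rfl, rfl⟩ := Prod.mk.injEq .. ▸ h
    exact hb hqb.2.1
  have hcard1 : {b' : L | Sum.inr b' ∈ X ∪ {Sum.inr b}}.ncard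
      = {b' : L | Sum.inr b' ∈ X}.ncard + 1 := by
    rw [hblks, Set.ncard_insert_of_notMem hbmem (blks_finite hX)]
  have hcard2 : {pb : P × L | Sum.inl pb.1 ∈ X ∪ {Sum.inr b} ∧ Sum.inr pb.2 ∈ X ∪ {Sum.inr b}
        ∧ I pb.1 pb.2}.ncard
      = {pb : P × L | Sum.inl pb.1 ∈ X ∧ Sum.inr pb.2 ∈ X ∧ I pb.1 pb.2}.ncard
        + (pointsIn I X b).ncard := by
    rw [hinc, Set.ncard_union_eq hdisj (inc_finite hX) ((pointsIn_finite hX b).image _),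
      Set.ncard_image_of_injective _ (fun a a' h => congrArg Prod.fst h)]
  unfold delta
  rw [hpts, hcard1, hcard2]
  push_cast
  ring

lemma hyperfree_mono {X Y : Set (P ⊕ L)} (h : X ⊆ Y) {c : P ⊕ L}
    (hf : Hyperfree k I Y c) : Hyperfree k I X c := by
  cases c with
  | inl p =>
    have hsub : blocksIn I X p ⊆ blocksIn I Y p := fun b hb => ⟨h hb.1, hb.2⟩
    exact le_trans (Set.encard_mono hsub) hf
  | inr b =>
    have hsub : pointsIn I X b ⊆ pointsIn I Y b := fun q hq => ⟨h hq.1, hq.2⟩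
    exact le_trans (Set.encard_mono hsub) hf

lemma delta_diff_le {X : Set (P ⊕ L)} (hX : X.Finite) {c : P ⊕ L} (hc : c ∈ X)
    (hf : Hyperfree k I X c) : delta k I (X \ {c}) ≤ delta k I X := by
  have hXeq : (X \ {c}) ∪ {c} = X := by
    rw [Set.diff_union_self, Set.union_eq_self_of_subset_right (Set.singleton_subset_iff.mpr hc)]
  have hcn : c ∉ X \ {c} := fun h => h.2 rfl
  have hfin : (X \ {c}).Finite := hX.subset Set.diff_subset
  cases c with
  | inl p =>
    have hsub : blocksIn I (X \ {Sum.inl p}) p ⊆ blocksIn I X p :=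
      fun b hb => ⟨hb.1.1, hb.2⟩
    have henc : (blocksIn I (X \ {Sum.inl p}) p).encard ≤ (1 : ℕ) :=
      le_trans (Set.encard_mono hsub) (by exact_mod_cast hf)
    obtain ⟨-, hle⟩ := Set.encard_le_coe_iff_finite_ncard_le.mp henc
    have := delta_insert_inl (k := k) (I := I) hfin hcn
    rw [hXeq] at this
    rw [this]
    have : ((blocksIn I (X \ {Sum.inl p}) p).ncard : ℤ) ≤ 1 := by exact_mod_cast hle
    linarith
  | inr b =>
    have hsub : pointsIn I (X \ {Sum.inr b}) b ⊆ pointsIn I X b :=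
      fun q hq => ⟨hq.1.1, hq.2⟩
    have henc : (pointsIn I (X \ {Sum.inr b}) b).encard ≤ (k : ℕ) :=
      le_trans (Set.encard_mono hsub) hf
    obtain ⟨-, hle⟩ := Set.encard_le_coe_iff_finite_ncard_le.mp henc
    have := delta_insert_inr (k := k) (I := I) hfin hcn
    rw [hXeq] at this
    rw [this]
    have : ((pointsIn I (X \ {Sum.inr b}) b).ncard : ℤ) ≤ (k : ℤ) := by exact_mod_cast hle
    linarith

lemma main_i {A B : Set (P ⊕ L)} (hAB : A ⊆ B) (hBfin : B.Finite)
    (hOO : OpenOver k I A B) :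
    ∀ m : ℕ, ∀ B₀ : Set (P ⊕ L), B₀ ⊆ B → (B₀ \ A).ncard = m →
      delta k I (A ∩ B₀) ≤ delta k I B₀ := by
  intro m
  induction m using Nat.strong_induction_on with
  | _ m ih =>
    intro B₀ hB₀ hm
    by_cases hsub : B₀ ⊆ A
    · rw [Set.inter_eq_right.mpr hsub]
    · have hne : (B₀ \ A).Nonempty := Set.diff_nonempty.mpr hsub
      have hCfin : (B₀ \ A).Finite := (hBfin.subset hB₀).subset Set.diff_subset
      obtain ⟨c, hcC, hcH⟩ := hOO (B₀ \ A) (Set.diff_subset_diff_left hB₀) hCfin hne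
      have hB₀sub : B₀ ⊆ A ∪ (B₀ \ A) := by
        intro x hx
        by_cases hxA : x ∈ A
        · exact Or.inl hxA
        · exact Or.inr ⟨hx, hxA⟩
      have hfB₀ : Hyperfree k I B₀ c := hyperfree_mono hB₀sub hcH
      have hstep : delta k I (B₀ \ {c}) ≤ delta k I B₀ :=
        delta_diff_le (hBfin.subset hB₀) hcC.1 hfB₀
      have hinter : A ∩ (B₀ \ {c}) = A ∩ B₀ := by
        ext x
        simp only [Set.mem_inter_iff, Set.mem_diff, Set.mem_singleton_iff]
        constructor
        · rintro ⟨hxA, hxB, -⟩; exact ⟨hxA, hxB⟩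
        · rintro ⟨hxA, hxB⟩; exact ⟨hxA, hxB, fun h => hcC.2 (h ▸ hxA)⟩
      have hdiffeq : (B₀ \ {c}) \ A = (B₀ \ A) \ {c} := Set.diff_diff_comm
      have hlt : ((B₀ \ {c}) \ A).ncard < m := by
        rw [hdiffeq, ← hm]
        exact Set.ncard_diff_singleton_lt_of_mem hcC hCfin
      have := ih _ hlt (B₀ \ {c}) (Set.diff_subset.trans hB₀) rfl
      rw [hinter] at this
      exact le_trans this hstep

end SteinerAux

namespace SteinerAux2

open Set SteinerAux

variable {P L : Type} {k : ℕ} {I : P → L → Prop}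

lemma main_ii {A : Set (P ⊕ L)} {c : P ⊕ L} (hcA : c ∉ A) (hA : A.Finite)
    (hOO : OpenOver k I A (A ∪ {c})) :
    (delta k I (A ∪ {c}) = delta k I A ↔
        ((∃ p : P, c = Sum.inl p ∧ (blocksIn I A p).encard = 1) ∨
         (∃ b : L, c = Sum.inr b ∧ (pointsIn I A b).encard = k))) ∧
    (¬ ((∃ p : P, c = Sum.inl p ∧ (blocksIn I A p).encard = 1) ∨
         (∃ b : L, c = Sum.inr b ∧ (pointsIn I A b).encard = k)) →
       delta k I A < delta k I (A ∪ {c})) := by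
  obtain ⟨c', hc', hf⟩ := hOO {c}
    (by intro x hx; rw [Set.mem_singleton_iff] at hx; subst hx; exact ⟨Or.inr rfl, hcA⟩)
    (Set.finite_singleton c) ⟨c, rfl⟩
  rw [Set.mem_singleton_iff] at hc'
  subst hc'
  cases c' with
  | inl p =>
    have hbeq : blocksIn I (A ∪ {Sum.inl p}) p = blocksIn I A p := by
      ext b; simp [blocksIn]
    have hf' : (blocksIn I (A ∪ {Sum.inl p}) p).encard ≤ 1 := hf
    rw [hbeq] at hf'
    have henc : (blocksIn I A p).encard ≤ ((1 : ℕ) : ℕ∞) := by exact_mod_cast hf'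
    obtain ⟨hfin, hle⟩ := Set.encard_le_coe_iff_finite_ncard_le.mp henc
    have hd := delta_insert_inl (k := k) (I := I) hA hcA
    have hiff : (blocksIn I A p).ncard = 1 ↔ (blocksIn I A p).encard = 1 := by
      rw [Set.ncard_eq_one, Set.encard_eq_one]
    constructor
    · rw [hd]
      constructor
      · intro heq
        left
        refine ⟨p, rfl, ?_⟩
        rw [← hiff]
        have hm : ((blocksIn I A p).ncard : ℤ) = 1 := by linarith
        exact_mod_cast hm
      · rintro (⟨p', hp', he⟩ | ⟨b, hb, -⟩)
        · obtain rfl : p = p' := by injection hp'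
          have h1 : (blocksIn I A p).ncard = 1 := hiff.mpr he
          rw [h1]; push_cast; ring
        · exact absurd hb (by simp)
    · intro hne
      rw [hd]
      have h0 : (blocksIn I A p).ncard ≠ 1 := fun h =>
        hne (Or.inl ⟨p, rfl, hiff.mp h⟩)
      have hz : (blocksIn I A p).ncard = 0 := by omega
      rw [hz]
      push_cast
      linarith
  | inr b =>
    have hbeq : pointsIn I (A ∪ {Sum.inr b}) b = pointsIn I A b := by
      ext q; simp [pointsIn]
    have hf' : (pointsIn I (A ∪ {Sum.inr b}) b).encard ≤ (k : ℕ∞) := hf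
    rw [hbeq] at hf'
    obtain ⟨hfin, hle⟩ := Set.encard_le_coe_iff_finite_ncard_le.mp hf'
    have hd := delta_insert_inr (k := k) (I := I) hA hcA
    have hiff : (pointsIn I A b).ncard = k ↔ (pointsIn I A b).encard = (k : ℕ∞) := by
      rw [← hfin.cast_ncard_eq, Nat.cast_inj]
    constructor
    · rw [hd]
      constructor
      · intro heq
        right
        refine ⟨b, rfl, ?_⟩
        rw [← hiff]
        have hm : ((pointsIn I A b).ncard : ℤ) = (k : ℤ) := by linarith
        exact_mod_cast hm
      · rintro (⟨p, hp, -⟩ | ⟨b', hb', he⟩)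
        · exact absurd hp (by simp)
        · obtain rfl : b = b' := by injection hb'
          have h1 : (pointsIn I A b).ncard = k := hiff.mpr he
          rw [h1]; push_cast; ring
    · intro hne
      rw [hd]
      have h0 : (pointsIn I A b).ncard ≠ k := fun h =>
        hne (Or.inr ⟨b, rfl, hiff.mp h⟩)
      have hlt : (pointsIn I A b).ncard < k := lt_of_le_of_ne hle h0
      have : ((pointsIn I A b).ncard : ℤ) < (k : ℤ) := by exact_mod_cast hlt
      linarith

end SteinerAux2

theorem stmt9 {P L : Type} (k n : ℕ) (hk : 2 ≤ k) (hkn : k < n) (I : P → L → Prop) :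
    -- (i)
    (∀ A B : Set (P ⊕ L), A ⊆ B → B.Finite →
      IsPartial k n I B → IsOpen k I B → IsPartial k n I A → IsOpen k I A →
      OpenOver k I A B →
      ∀ B₀ : Set (P ⊕ L), B₀ ⊆ B → delta k I (A ∩ B₀) ≤ delta k I B₀) ∧
    -- (ii)
    (∀ (A : Set (P ⊕ L)) (c : P ⊕ L), c ∉ A → A.Finite →
      IsPartial k n I (A ∪ {c}) → IsOpen k I (A ∪ {c}) →
      OpenOver k I A (A ∪ {c}) →
      ((delta k I (A ∪ {c}) = delta k I A ↔
          ((∃ p : P, c = Sum.inl p ∧ (blocksIn I A p).encard = 1) ∨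
           (∃ b : L, c = Sum.inr b ∧ (pointsIn I A b).encard = k))) ∧
       (¬ ((∃ p : P, c = Sum.inl p ∧ (blocksIn I A p).encard = 1) ∨
           (∃ b : L, c = Sum.inr b ∧ (pointsIn I A b).encard = k)) →
         delta k I A < delta k I (A ∪ {c})))) ∧
    -- (iii)
    (∀ A B : Set (P ⊕ L), A ⊆ B → B.Finite → IsPartial k n I B →
      (∀ B₀ : Set (P ⊕ L), B₀ ⊆ B → delta k I (A ∩ B₀) ≤ delta k I B₀) →
      ∀ C : Set (P ⊕ L), C ⊆ B → ∀ C₀ : Set (P ⊕ L), C₀ ⊆ C →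
        delta k I (A ∩ C₀) ≤ delta k I C₀) := by
  refine ⟨?_, ?_, ?_⟩
  · intro A B hAB hBfin _ _ _ _ hOO B₀ hB₀
    exact SteinerAux.main_i hAB hBfin hOO _ B₀ hB₀ rfl
  · intro A c hcA hA _ _ hOO
    exact SteinerAux2.main_ii hcA hA hOO
  · intro A B hAB hBfin _ hδ C hC C₀ hC₀
    exact hδ C₀ (hC₀.trans hC)
end
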